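/- arXiv:0706.1337 — 8 statements merged into one kernel-verified Lean document; each statement's English description precedes it below -/
import Mathlib

section
/- The bracket on d = g ⊕ g* defined by [x+ξ, y+η] = [x,y] + ad*_ξ y − ad*_η x + [ξ,η] + ad*_x η − ad*_y ξ (where (ad*_x ξ, y) = (ξ,[y,x]) and (ad*_ξ x, η) = (x,[η,ξ])) is a Lie bracket, i.e. it is skew-symmetric and satisfies the Jacobi identity. -/
/-!
The Jacobiator of a skew-symmetric biadditive bracket is triadditive and invariant under cyclic
permutations, so on `g × g*` it vanishes once it vanishes on triples of pure elements of the
types `(g, g, g)`, `(g, g, g*)`, `(g, g*, g*)` and `(g*, g*, g*)`. The first case is the Jacobi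
identity of `g`. In the second, the `g*`-component says that `ad*` is a representation, and the
`g`-component, paired against `g*`, is the cocycle condition. The remaining two cases follow by
symmetry: the cocycle condition is self-dual (`IsLieBialgebraPairing.flip`), and swapping the
factors identifies the double of `(g, g*)` with the double of `(g*, g)`.
-/

section Jacobiator

variable {M : Type*} [AddCommGroup M] (B : M →+ M →+ M)

def jacobiator (u v w : M) : M := B u (B v w) - B (B u v) w - B v (B u w)

lemma jacobiator_add_left (u u' v w : M) :
    jacobiator B (u + u') v w = jacobiator B u v w + jacobiator B u' v w := by
  simp only [jacobiator, map_add, AddMonoidHom.add_apply]; abel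

lemma jacobiator_add_middle (u v v' w : M) :
    jacobiator B u (v + v') w = jacobiator B u v w + jacobiator B u v' w := by
  simp only [jacobiator, map_add, AddMonoidHom.add_apply]; abel

lemma jacobiator_add_right (u v w w' : M) :
    jacobiator B u v (w + w') = jacobiator B u v w + jacobiator B u v w' := by
  simp only [jacobiator, map_add]; abel

lemma jacobiator_cyclic (hB : ∀ u v, B u v = -B v u) (u v w : M) :
    jacobiator B u v w = jacobiator B v w u := by
  rw [jacobiator, jacobiator, hB w u, map_neg, hB (B v w) u, hB w (B v u), hB v u, map_neg,
    AddMonoidHom.neg_apply, neg_neg]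
  abel

lemma jacobiator_prod_eq_zero {A S : Type*} [AddCommGroup A] [AddCommGroup S]
    (B : A × S →+ A × S →+ A × S) (hB : ∀ u v, B u v = -B v u)
    (hAAA : ∀ a b c, jacobiator B (a, 0) (b, 0) (c, 0) = 0)
    (hAAS : ∀ a b s, jacobiator B (a, 0) (b, 0) (0, s) = 0)
    (hASS : ∀ a s t, jacobiator B (a, 0) (0, s) (0, t) = 0)
    (hSSS : ∀ s t r, jacobiator B (0, s) (0, t) (0, r) = 0)
    (u v w : A × S) : jacobiator B u v w = 0 := by
  have hASA : ∀ a s b, jacobiator B (a, 0) (0, s) (b, 0) = 0 := fun a s b => by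
    rw [jacobiator_cyclic B hB, jacobiator_cyclic B hB]; exact hAAS b a s
  have hSAA : ∀ s a b, jacobiator B (0, s) (a, 0) (b, 0) = 0 := fun s a b => by
    rw [jacobiator_cyclic B hB]; exact hAAS a b s
  have hSAS : ∀ s a t, jacobiator B (0, s) (a, 0) (0, t) = 0 := fun s a t => by
    rw [jacobiator_cyclic B hB]; exact hASS a t s
  have hSSA : ∀ s t a, jacobiator B (0, s) (0, t) (a, 0) = 0 := fun s t a => by
    rw [jacobiator_cyclic B hB, jacobiator_cyclic B hB]; exact hASS a s t
  rw [← Prod.fst_add_snd u, ← Prod.fst_add_snd v, ← Prod.fst_add_snd w]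
  simp only [jacobiator_add_left, jacobiator_add_middle, jacobiator_add_right,
    hAAA, hAAS, hASA, hASS, hSAA, hSAS, hSSA, hSSS, add_zero]

end Jacobiator

section DrinfeldDouble

variable {R : Type*} [CommRing R] {g gs : Type*} [LieRing g] [Module R g] [LieRing gs] [Module R gs]

lemma coadjoint_lie_apply {p : g →ₗ[R] gs →ₗ[R] R}
    (hp : ∀ ξ : gs, (∀ x : g, p x ξ = 0) → ξ = 0)
    {coadg : g →ₗ[R] gs →ₗ[R] gs} (hcoadg : ∀ (x y : g) (ξ : gs), p y (coadg x ξ) = p ⁅y, x⁆ ξ)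
    (x y : g) (ξ : gs) :
    coadg ⁅x, y⁆ ξ = coadg x (coadg y ξ) - coadg y (coadg x ξ) := by
  refine sub_eq_zero.mp (hp _ fun z => ?_)
  have hz : ⁅z, ⁅x, y⁆⁆ = ⁅⁅z, x⁆, y⁆ - ⁅⁅z, y⁆, x⁆ := by
    rw [leibniz_lie, ← lie_skew x ⁅z, y⁆]; abel
  simp only [map_sub, hcoadg, hz, LinearMap.sub_apply, sub_self]

def doubleBracket (coadg : g →ₗ[R] gs →ₗ[R] gs) (coadgs : gs →ₗ[R] g →ₗ[R] g) :
    g × gs →+ g × gs →+ g × gs :=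
  AddMonoidHom.mk' (fun u => AddMonoidHom.mk' (fun v =>
      (⁅u.1, v.1⁆ + coadgs u.2 v.1 - coadgs v.2 u.1, ⁅u.2, v.2⁆ + coadg u.1 v.2 - coadg v.1 u.2))
      fun v w => by ext <;> simp only [Prod.fst_add, Prod.snd_add, lie_add, map_add,
        LinearMap.add_apply] <;> abel)
    fun u v => by ext w <;> simp only [AddMonoidHom.mk'_apply, AddMonoidHom.add_apply,
      Prod.fst_add, Prod.snd_add, add_lie, map_add, LinearMap.add_apply] <;> abel

lemma doubleBracket_skew (coadg : g →ₗ[R] gs →ₗ[R] gs) (coadgs : gs →ₗ[R] g →ₗ[R] g)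
    (u v : g × gs) : doubleBracket coadg coadgs u v = -doubleBracket coadg coadgs v u := by
  ext <;> simp only [doubleBracket, AddMonoidHom.mk'_apply, Prod.fst_neg, Prod.snd_neg]
  · rw [← lie_skew v.1 u.1]; abel
  · rw [← lie_skew v.2 u.2]; abel

lemma jacobiator_doubleBracket_inl_inl_inl (coadg : g →ₗ[R] gs →ₗ[R] gs)
    (coadgs : gs →ₗ[R] g →ₗ[R] g) (x y z : g) :
    jacobiator (doubleBracket coadg coadgs) (x, 0) (y, 0) (z, 0) = 0 := by
  ext <;> simp [jacobiator, doubleBracket]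

lemma jacobiator_doubleBracket_swap (coadg : g →ₗ[R] gs →ₗ[R] gs) (coadgs : gs →ₗ[R] g →ₗ[R] g)
    (u v w : gs × g) :
    jacobiator (doubleBracket coadg coadgs) u.swap v.swap w.swap =
      (jacobiator (doubleBracket coadgs coadg) u v w).swap :=
  rfl

structure IsLieBialgebraPairing (p : g →ₗ[R] gs →ₗ[R] R) (coadg : g →ₗ[R] gs →ₗ[R] gs)
    (coadgs : gs →ₗ[R] g →ₗ[R] g) : Prop where
  nondegenerate_left : ∀ x : g, (∀ ξ : gs, p x ξ = 0) → x = 0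
  nondegenerate_right : ∀ ξ : gs, (∀ x : g, p x ξ = 0) → ξ = 0
  pair_coadg : ∀ (x y : g) (ξ : gs), p y (coadg x ξ) = p ⁅y, x⁆ ξ
  pair_coadgs : ∀ (ξ η : gs) (x : g), p (coadgs ξ x) η = p x ⁅η, ξ⁆
  cocycle : ∀ (x y : g) (ξ η : gs), p ⁅x, y⁆ ⁅ξ, η⁆ =
    -p y ⁅coadg x ξ, η⁆ - p y ⁅ξ, coadg x η⁆ + p x ⁅coadg y ξ, η⁆ + p x ⁅ξ, coadg y η⁆

namespace IsLieBialgebraPairing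

variable {p : g →ₗ[R] gs →ₗ[R] R} {coadg : g →ₗ[R] gs →ₗ[R] gs} {coadgs : gs →ₗ[R] g →ₗ[R] g}

lemma pair_lie_coadgs (h : IsLieBialgebraPairing p coadg coadgs) (ξ η : gs) (x y : g) :
    p ⁅coadgs ξ x, y⁆ η = p x ⁅coadg y η, ξ⁆ := by
  rw [← h.pair_coadg, h.pair_coadgs]

lemma flip (h : IsLieBialgebraPairing p coadg coadgs) :
    IsLieBialgebraPairing p.flip coadgs coadg where
  nondegenerate_left := h.nondegenerate_right
  nondegenerate_right := h.nondegenerate_left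
  pair_coadg := h.pair_coadgs
  pair_coadgs x y ξ := h.pair_coadg x y ξ
  cocycle ξ η x y := by
    have hc := h.cocycle x y ξ η
    rw [← lie_skew ξ (coadg x η), ← lie_skew ξ (coadg y η)] at hc
    simp only [LinearMap.flip_apply]
    rw [← lie_skew x (coadgs ξ y), ← lie_skew x (coadgs η y)]
    simp only [map_neg, LinearMap.neg_apply, h.pair_lie_coadgs] at hc ⊢
    linear_combination hc

lemma coadgs_apply_lie (h : IsLieBialgebraPairing p coadg coadgs) (ζ : gs) (x y : g) :
    coadgs ζ ⁅x, y⁆ =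
      ⁅coadgs ζ x, y⁆ + ⁅x, coadgs ζ y⁆ + coadgs (coadg y ζ) x - coadgs (coadg x ζ) y := by
  refine sub_eq_zero.mp (h.nondegenerate_left _ fun θ => ?_)
  rw [← lie_skew x (coadgs ζ y)]
  simp only [map_sub, map_add, map_neg, LinearMap.sub_apply, LinearMap.add_apply,
    LinearMap.neg_apply, h.pair_coadgs, h.pair_lie_coadgs]
  linear_combination h.cocycle x y θ ζ

lemma jacobiator_doubleBracket_inl_inl_inr (h : IsLieBialgebraPairing p coadg coadgs)
    (x y : g) (ζ : gs) : jacobiator (doubleBracket coadg coadgs) (x, 0) (y, 0) (0, ζ) = 0 := by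
  ext <;> simp only [jacobiator, doubleBracket, AddMonoidHom.mk'_apply, map_zero,
    LinearMap.zero_apply, add_zero, zero_add, sub_zero, zero_sub, zero_lie, lie_zero, lie_neg,
    lie_skew, lie_lie, sub_self, Prod.mk_sub_mk, sub_neg_eq_add, Prod.fst_zero, Prod.snd_zero]
  · rw [h.coadgs_apply_lie, ← lie_skew x (coadgs ζ y)]; abel
  · rw [coadjoint_lie_apply h.nondegenerate_right h.pair_coadg]; abel

lemma jacobiator_doubleBracket_eq_zero (h : IsLieBialgebraPairing p coadg coadgs)
    (u v w : g × gs) : jacobiator (doubleBracket coadg coadgs) u v w = 0 := by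
  refine jacobiator_prod_eq_zero _ (doubleBracket_skew coadg coadgs)
    (jacobiator_doubleBracket_inl_inl_inl coadg coadgs) h.jacobiator_doubleBracket_inl_inl_inr
    (fun x η ζ => ?_) (fun ξ η ζ => ?_) u v w
  · rw [jacobiator_cyclic _ (doubleBracket_skew coadg coadgs)]
    refine (jacobiator_doubleBracket_swap coadg coadgs (η, 0) (ζ, 0) (0, x)).trans ?_
    rw [h.flip.jacobiator_doubleBracket_inl_inl_inr, Prod.swap_zero]
  · refine (jacobiator_doubleBracket_swap coadg coadgs (ξ, 0) (η, 0) (ζ, 0)).trans ?_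
    rw [jacobiator_doubleBracket_inl_inl_inl, Prod.swap_zero]

end IsLieBialgebraPairing

end DrinfeldDouble

theorem double_bracket_is_lie_bracket_general
    (g gs : Type) [LieRing g] [LieAlgebra ℝ g] [LieRing gs] [LieAlgebra ℝ gs]
    -- a perfect pairing between `g` and its "dual" `gs`
    (p : g →ₗ[ℝ] gs →ₗ[ℝ] ℝ)
    (hp1 : ∀ x : g, (∀ ξ : gs, p x ξ = 0) → x = 0)
    (hp2 : ∀ ξ : gs, (∀ x : g, p x ξ = 0) → ξ = 0)
    -- `coadg x ξ = ad*_x ξ`, characterized by `(ad*_x ξ, y) = (ξ, [y,x])`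
    (coadg : g →ₗ[ℝ] gs →ₗ[ℝ] gs)
    (hcoadg : ∀ (x y : g) (ξ : gs), p y (coadg x ξ) = p ⁅y, x⁆ ξ)
    -- `coadgs ξ x = ad*_ξ x`, characterized by `(ad*_ξ x, η) = (x, [η,ξ])`
    (coadgs : gs →ₗ[ℝ] g →ₗ[ℝ] g)
    (hcoadgs : ∀ (ξ η : gs) (x : g), p (coadgs ξ x) η = p x ⁅η, ξ⁆)
    -- the Lie bialgebra cocycle condition `δ[x,y] = ad_x δ(y) − ad_y δ(x)`,
    -- written out against the pairing (with `δ(z)(ξ∧η) = ⟨z, [ξ,η]⟩`)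
    (hcocycle : ∀ (x y : g) (ξ η : gs),
      p ⁅x, y⁆ ⁅ξ, η⁆ =
        - p y ⁅coadg x ξ, η⁆ - p y ⁅ξ, coadg x η⁆
        + p x ⁅coadg y ξ, η⁆ + p x ⁅ξ, coadg y η⁆) :
    -- the Drinfeld double bracket on `d = g ⊕ g*`
    let Bd : g × gs → g × gs → g × gs := fun u v =>
      (⁅u.1, v.1⁆ + coadgs u.2 v.1 - coadgs v.2 u.1,
       ⁅u.2, v.2⁆ + coadg u.1 v.2 - coadg v.1 u.2)
    -- skew-symmetry and the Jacobi identity (in Leibniz form)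
    (∀ u v : g × gs, Bd u v = - Bd v u) ∧
    (∀ u v w : g × gs, Bd u (Bd v w) = Bd (Bd u v) w + Bd v (Bd u w)) := by
  have h : IsLieBialgebraPairing p coadg coadgs := ⟨hp1, hp2, hcoadg, hcoadgs, hcocycle⟩
  refine ⟨doubleBracket_skew coadg coadgs, fun u v w => ?_⟩
  rw [← sub_eq_zero, ← sub_sub]
  exact h.jacobiator_doubleBracket_eq_zero u v w

/-- Let `(g, δ)` be a finite-dimensional Lie bialgebra, presented here via
an abstract dual `gs` with a perfect pairing `p`, a Lie bracket on `gs` (dual to `δ`),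
the coadjoint-type actions `coadg = ad*_x` and `coadgs = ad*_ξ`, and the cocycle
compatibility condition.  Then the Drinfeld double bracket
`[x+ξ, y+η] = [x,y] + ad*_ξ y − ad*_η x + [ξ,η] + ad*_x η − ad*_y ξ` on `d = g ⊕ g*`
is a Lie bracket: it is skew-symmetric and satisfies the Jacobi identity. -/
theorem double_bracket_is_lie_bracket
    (g gs : Type) [LieRing g] [LieAlgebra ℝ g] [LieRing gs] [LieAlgebra ℝ gs]
    [FiniteDimensional ℝ g] [FiniteDimensional ℝ gs]
    -- a perfect pairing between `g` and its "dual" `gs`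
    (p : g →ₗ[ℝ] gs →ₗ[ℝ] ℝ)
    (hp1 : ∀ x : g, (∀ ξ : gs, p x ξ = 0) → x = 0)
    (hp2 : ∀ ξ : gs, (∀ x : g, p x ξ = 0) → ξ = 0)
    -- `coadg x ξ = ad*_x ξ`, characterized by `(ad*_x ξ, y) = (ξ, [y,x])`
    (coadg : g →ₗ[ℝ] gs →ₗ[ℝ] gs)
    (hcoadg : ∀ (x y : g) (ξ : gs), p y (coadg x ξ) = p ⁅y, x⁆ ξ)
    -- `coadgs ξ x = ad*_ξ x`, characterized by `(ad*_ξ x, η) = (x, [η,ξ])`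
    (coadgs : gs →ₗ[ℝ] g →ₗ[ℝ] g)
    (hcoadgs : ∀ (ξ η : gs) (x : g), p (coadgs ξ x) η = p x ⁅η, ξ⁆)
    -- the Lie bialgebra cocycle condition `δ[x,y] = ad_x δ(y) − ad_y δ(x)`,
    -- written out against the pairing (with `δ(z)(ξ∧η) = ⟨z, [ξ,η]⟩`)
    (hcocycle : ∀ (x y : g) (ξ η : gs),
      p ⁅x, y⁆ ⁅ξ, η⁆ =
        - p y ⁅coadg x ξ, η⁆ - p y ⁅ξ, coadg x η⁆
        + p x ⁅coadg y ξ, η⁆ + p x ⁅ξ, coadg y η⁆) :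
    -- the Drinfeld double bracket on `d = g ⊕ g*`
    let Bd : g × gs → g × gs → g × gs := fun u v =>
      (⁅u.1, v.1⁆ + coadgs u.2 v.1 - coadgs v.2 u.1,
       ⁅u.2, v.2⁆ + coadg u.1 v.2 - coadg v.1 u.2)
    -- skew-symmetry and the Jacobi identity (in Leibniz form)
    (∀ u v : g × gs, Bd u v = - Bd v u) ∧
    (∀ u v w : g × gs, Bd u (Bd v w) = Bd (Bd u v) w + Bd v (Bd u w)) :=
  double_bracket_is_lie_bracket_general g gs p hp1 hp2 coadg hcoadg coadgs hcoadgs hcocycle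
end

section
/- Let h be a subspace of a finite-dimensional vector space g and h⁰ = {ξ ∈ g* : ξ|_h = 0}. Equip d = g ⊕ g* with the pairing ⟨x+ξ, y+η⟩ = ξ(y) + η(x). Then the map r ↦ l_r := {x + ξ : ξ ∈ h⁰, q(x) = ι_ξ r} is a bijection between ∧²(g/h) and the set of Lagrangian subspaces l of d (i.e. ⟨l, l⟩ = 0 and dim l = dim g) satisfying l ∩ g = h, where q: g → g/h is the projection and ι_ξ r ∈ g/h denotes contraction. -/
/-!
Replace `g*` by any space `W` and `h⁰` by any subspace `A ⊆ W`. A linear map `e : A → g/h`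
has the graph `{(x, w) : w ∈ A, [x] = e w}`: it meets `g × 0` in exactly `h × 0` and projects
onto `A`, so it has dimension `dim A + dim h`, and distinct maps have distinct graphs.
Conversely, a subspace `l` with `l ∩ (g × 0) = h × 0` projecting into `A` and of that dimension
is a graph: reading `e` off a linear section of `l → A` gives `l ≤ graph e`, and the dimensions
agree. For `A = h⁰` that dimension is `dim g`; isotropy of the graph is precisely skewness of
`e`, and an isotropic `l ⊇ h × 0` automatically projects into `h⁰`.
-/

open Module

section QuotGraph

variable {K V W : Type*} [Field K] [AddCommGroup V] [Module K V] [AddCommGroup W] [Module K W]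

theorem Submodule.finrank_map_add_finrank_inf_ker {V₂ : Type*} [AddCommGroup V₂] [Module K V₂]
    (f : V →ₗ[K] V₂) (l : Submodule K V) [FiniteDimensional K l] :
    finrank K (l.map f) + finrank K ↥(l ⊓ LinearMap.ker f) = finrank K l := by
  have hker : LinearMap.ker (f.domRestrict l) = (l ⊓ LinearMap.ker f).comap l.subtype := by
    rw [LinearMap.ker_domRestrict, Submodule.comap_inf, Submodule.comap_subtype_self, top_inf_eq]
  rw [← LinearMap.range_domRestrict, ← LinearMap.finrank_range_add_finrank_ker (f.domRestrict l),
    hker, (Submodule.comapSubtypeEquivOfLe inf_le_left).finrank_eq]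

theorem Submodule.finrank_map_inl (h : Submodule K V) :
    finrank K (h.map (LinearMap.inl K V W)) = finrank K h :=
  (Submodule.equivMapOfInjective _ LinearMap.inl_injective h).finrank_eq.symm

variable (h : Submodule K V) (A : Submodule K W)

def quotGraph (e : A →ₗ[K] V ⧸ h) : Submodule K (V × W) where
  carrier := {u | ∃ hm : u.2 ∈ A, Submodule.Quotient.mk u.1 = e ⟨u.2, hm⟩}
  add_mem' := by
    rintro u v ⟨hu, equ⟩ ⟨hv, eqv⟩
    refine ⟨A.add_mem hu hv, ?_⟩
    rw [Prod.fst_add, Submodule.Quotient.mk_add, equ, eqv, ← map_add]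
    rfl
  zero_mem' := ⟨A.zero_mem, (map_zero e).symm⟩
  smul_mem' := by
    rintro c u ⟨hu, equ⟩
    refine ⟨A.smul_mem c hu, ?_⟩
    rw [Prod.smul_fst, Submodule.Quotient.mk_smul, equ, ← map_smul]
    rfl

variable {h A}

@[simp]
theorem mem_quotGraph {e : A →ₗ[K] V ⧸ h} {u : V × W} :
    u ∈ quotGraph h A e ↔ ∃ hm : u.2 ∈ A, Submodule.Quotient.mk u.1 = e ⟨u.2, hm⟩ :=
  Iff.rfl

theorem mk_mem_quotGraph {e : A →ₗ[K] V ⧸ h} {x : V} (ξ : A)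
    (hx : Submodule.Quotient.mk x = e ξ) : (x, (ξ : W)) ∈ quotGraph h A e :=
  ⟨ξ.2, hx⟩

theorem quotGraph_inf_ker_snd (e : A →ₗ[K] V ⧸ h) :
    quotGraph h A e ⊓ LinearMap.ker (LinearMap.snd K V W) = h.map (LinearMap.inl K V W) := by
  ext ⟨x, w⟩
  simp only [Submodule.mem_inf, mem_quotGraph, LinearMap.mem_ker, LinearMap.snd_apply,
    Submodule.map_inl, Submodule.mem_prod, Submodule.mem_bot]
  have he0 : e ⟨0, A.zero_mem⟩ = 0 := map_zero e
  constructor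
  · rintro ⟨⟨_, hx⟩, rfl⟩
    rw [he0, Submodule.Quotient.mk_eq_zero] at hx
    exact ⟨hx, rfl⟩
  · rintro ⟨hx, rfl⟩
    exact ⟨⟨A.zero_mem, by rwa [he0, Submodule.Quotient.mk_eq_zero]⟩, rfl⟩

theorem map_snd_quotGraph (e : A →ₗ[K] V ⧸ h) :
    (quotGraph h A e).map (LinearMap.snd K V W) = A := by
  refine le_antisymm ?_ fun w hw => ?_
  · rintro _ ⟨u, ⟨hu, _⟩, rfl⟩
    exact hu
  · obtain ⟨x, hx⟩ := Submodule.Quotient.mk_surjective h (e ⟨w, hw⟩)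
    exact ⟨(x, w), mk_mem_quotGraph ⟨w, hw⟩ hx, rfl⟩

theorem finrank_quotGraph [FiniteDimensional K V] [FiniteDimensional K W]
    (e : A →ₗ[K] V ⧸ h) : finrank K (quotGraph h A e) = finrank K A + finrank K h := by
  rw [← Submodule.finrank_map_add_finrank_inf_ker (LinearMap.snd K V W), map_snd_quotGraph,
    quotGraph_inf_ker_snd, Submodule.finrank_map_inl]

theorem quotGraph_injective : Function.Injective (quotGraph (K := K) h A) := by
  intro e e' hee'
  ext ξ
  obtain ⟨x, hx⟩ := Submodule.Quotient.mk_surjective h (e ξ)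
  obtain ⟨_, hx'⟩ := (hee' ▸ mk_mem_quotGraph ξ hx : (x, (ξ : W)) ∈ quotGraph h A e')
  rw [← hx, hx']

theorem exists_eq_quotGraph [FiniteDimensional K V] [FiniteDimensional K W]
    {l : Submodule K (V × W)}
    (hinf : l ⊓ LinearMap.ker (LinearMap.snd K V W) = h.map (LinearMap.inl K V W))
    (hsnd : l.map (LinearMap.snd K V W) ≤ A)
    (hrank : finrank K l = finrank K A + finrank K h) :
    ∃ e : A →ₗ[K] V ⧸ h, l = quotGraph h A e := by
  have hA : l.map (LinearMap.snd K V W) = A := by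
    refine Submodule.eq_of_le_of_finrank_eq hsnd ?_
    have := Submodule.finrank_map_add_finrank_inf_ker (LinearMap.snd K V W) l
    rw [hinf, Submodule.finrank_map_inl, hrank] at this
    omega
  let p : l →ₗ[K] A :=
    ((LinearMap.snd K V W).domRestrict l).codRestrict A fun u => hsnd ⟨u, u.2, rfl⟩
  have hp : Function.Surjective p := by
    rintro ⟨w, hw⟩
    obtain ⟨u, hu, rfl⟩ := hA.symm ▸ hw
    exact ⟨⟨u, hu⟩, rfl⟩
  obtain ⟨s, hs⟩ := p.exists_rightInverse_of_surjective (LinearMap.range_eq_top.2 hp)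
  refine ⟨h.mkQ ∘ₗ LinearMap.fst K V W ∘ₗ l.subtype ∘ₗ s, ?_⟩
  refine Submodule.eq_of_le_of_finrank_eq (fun u hu => ⟨hsnd ⟨u, hu, rfl⟩, ?_⟩)
    (hrank.trans (finrank_quotGraph _).symm)
  set ξ : A := ⟨u.2, hsnd ⟨u, hu, rfl⟩⟩
  have hsξ : (s ξ : V × W).2 = u.2 := congrArg Subtype.val (LinearMap.congr_fun hs ξ)
  have hdiff : u - s ξ ∈ h.map (LinearMap.inl K V W) :=
    hinf ▸ ⟨l.sub_mem hu (s ξ).2, by simp [hsξ]⟩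
  rw [Submodule.map_inl, Submodule.mem_prod] at hdiff
  exact (Submodule.Quotient.eq h).2 hdiff.1

end QuotGraph

section Pairing

variable {K V : Type*} [Field K] [AddCommGroup V] [Module K V] {h : Submodule K V}

def IsIsotropic (l : Submodule K (V × Dual K V)) : Prop :=
  ∀ u ∈ l, ∀ v ∈ l, u.2 v.1 + v.2 u.1 = 0

theorem isIsotropic_quotGraph_iff (e : h.dualAnnihilator →ₗ[K] V ⧸ h) :
    IsIsotropic (quotGraph h h.dualAnnihilator e) ↔
      ∀ (ξ η : h.dualAnnihilator) (x y : V), Submodule.Quotient.mk x = e ξ →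
        Submodule.Quotient.mk y = e η → (ξ : Dual K V) y = -(η : Dual K V) x := by
  constructor
  · intro hiso ξ η x y hx hy
    exact eq_neg_of_add_eq_zero_left (hiso _ (mk_mem_quotGraph ξ hx) _ (mk_mem_quotGraph η hy))
  · rintro hskew u ⟨hu, equ⟩ v ⟨hv, eqv⟩
    rw [hskew _ _ _ _ equ eqv, neg_add_cancel]

theorem IsIsotropic.map_snd_le_dualAnnihilator {l : Submodule K (V × Dual K V)}
    (hiso : IsIsotropic l) (hh : h.map (LinearMap.inl K V (Dual K V)) ≤ l) :
    l.map (LinearMap.snd K V (Dual K V)) ≤ h.dualAnnihilator := by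
  rintro _ ⟨u, hu, rfl⟩
  refine (Submodule.mem_dualAnnihilator _).2 fun y hy => ?_
  simpa using hiso u hu (y, 0) (hh ⟨y, hy, rfl⟩)

end Pairing

/-- Let `h` be a subspace of a finite-dimensional vector space `g`,
`h⁰ = {ξ ∈ g* : ξ|_h = 0}`, and equip `d = g ⊕ g*` with the pairing
`⟨x+ξ, y+η⟩ = ξ(y) + η(x)`.  Then `r ↦ l_r := {x + ξ : ξ ∈ h⁰, q(x) = ι_ξ r}` is a
bijection between `∧²(g/h)` (encoded as skew-symmetric linear maps
`(g/h)* ≅ h⁰ → g/h`) and the set of Lagrangian subspaces `l` of `d` with `l ∩ g = h`.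
The bijection is expressed as: every skew `e` arises as the contraction map of a unique
such Lagrangian subspace, and every such Lagrangian subspace has this form for a
unique skew `e`. -/
theorem lagrangian_subspace_correspondence
    (g : Type) [AddCommGroup g] [Module ℝ g] [FiniteDimensional ℝ g]
    (h : Submodule ℝ g) :
    -- the pairing on `d = g × g*`
    let pr : (g × Module.Dual ℝ g) → (g × Module.Dual ℝ g) → ℝ :=
      fun u v => u.2 v.1 + v.2 u.1
    -- `g` and `h` viewed as subspaces of `d`
    let gsub : Submodule ℝ (g × Module.Dual ℝ g) :=
      LinearMap.ker (LinearMap.snd ℝ g (Module.Dual ℝ g))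
    let hsub : Submodule ℝ (g × Module.Dual ℝ g) :=
      h.map (LinearMap.inl ℝ g (Module.Dual ℝ g))
    -- Lagrangian: isotropic of dimension `dim g`
    let IsLag : Submodule ℝ (g × Module.Dual ℝ g) → Prop := fun l =>
      (∀ u ∈ l, ∀ v ∈ l, pr u v = 0) ∧ Module.finrank ℝ l = Module.finrank ℝ g
    -- `e : h⁰ → g/h` encodes an element `r` of `∧²(g/h)` via `e ξ = ι_ξ r`; skewness:
    let Skew : (h.dualAnnihilator →ₗ[ℝ] (g ⧸ h)) → Prop := fun e =>
      ∀ (ξ η : h.dualAnnihilator) (x y : g),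
        Submodule.Quotient.mk x = e ξ → Submodule.Quotient.mk y = e η →
          (ξ : Module.Dual ℝ g) y = - (η : Module.Dual ℝ g) x
    -- the set `l_r = {x + ξ : ξ ∈ h⁰, q(x) = ι_ξ r}`
    let carrier : (h.dualAnnihilator →ₗ[ℝ] (g ⧸ h)) → Set (g × Module.Dual ℝ g) :=
      fun e => {u | ∃ hm : u.2 ∈ h.dualAnnihilator,
        Submodule.Quotient.mk u.1 = e ⟨u.2, hm⟩}
    -- the correspondence is a bijection
    (∀ e, Skew e → ∃ l : Submodule ℝ (g × Module.Dual ℝ g),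
        (l : Set (g × Module.Dual ℝ g)) = carrier e ∧ IsLag l ∧ l ⊓ gsub = hsub) ∧
    (∀ l : Submodule ℝ (g × Module.Dual ℝ g), IsLag l → l ⊓ gsub = hsub →
        ∃! e : h.dualAnnihilator →ₗ[ℝ] (g ⧸ h),
          Skew e ∧ (l : Set (g × Module.Dual ℝ g)) = carrier e) := by
  intro pr gsub hsub IsLag Skew carrier
  have hdim : finrank ℝ h.dualAnnihilator + finrank ℝ h = finrank ℝ g :=
    (add_comm _ _).trans (Subspace.finrank_add_finrank_dualAnnihilator_eq h)
  refine ⟨fun e he => ⟨quotGraph h h.dualAnnihilator e, rfl,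
      ⟨(isIsotropic_quotGraph_iff e).2 he, (finrank_quotGraph e).trans hdim⟩,
      quotGraph_inf_ker_snd e⟩, fun l ⟨hiso, hrank⟩ hinf => ?_⟩
  have hsnd := IsIsotropic.map_snd_le_dualAnnihilator hiso (hinf ▸ inf_le_left)
  obtain ⟨e, rfl⟩ := exists_eq_quotGraph hinf hsnd (hrank.trans hdim.symm)
  exact ⟨e, ⟨(isIsotropic_quotGraph_iff e).1 hiso, rfl⟩,
    fun e' ⟨_, he'⟩ => (quotGraph_injective (SetLike.coe_injective he')).symm⟩
end

section
/- Every Lagrangian subspace l of d = g ⊕ g* (with respect to ⟨x+ξ, y+η⟩ = ξ(y)+η(x)) with l ∩ g = h has the form l = {x + Λξ + ξ : x ∈ h, ξ ∈ h⁰} for any Λ ∈ ∧²g whose image in ∧²(g/h) corresponds to l, where Λξ := ι_ξ Λ ∈ g. -/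
/-! An element `u = (x, ξ)` of `l` pairs to zero with every `(y, 0)`, `y ∈ h`, so `ξ ∈ h⁰`; hence
`(Λξ, ξ) ∈ l`, and the difference `(x - Λξ, 0)` lies in `l ∩ g = h`. Conversely `h ⊆ l` and
`(Λξ, ξ) ∈ l` for `ξ ∈ h⁰`. -/

namespace Submodule

variable {R M N : Type*} [CommRing R] [AddCommGroup M] [Module R M] [AddCommGroup N] [Module R N]

theorem inl_mem_iff_of_inf_ker_snd_eq {l : Submodule R (M × N)} {h : Submodule R M}
    (hlg : l ⊓ LinearMap.ker (LinearMap.snd R M N) = h.map (LinearMap.inl R M N)) (x : M) :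
    (x, 0) ∈ l ↔ x ∈ h := by
  have hker : ((x, 0) : M × N) ∈ l ⊓ LinearMap.ker (LinearMap.snd R M N) ↔ (x, 0) ∈ l :=
    and_iff_left rfl
  rw [← hker, hlg]
  simp

theorem coe_eq_inl_add_graph (l : Submodule R (M × N)) (h : Submodule R M) (S : Submodule R N)
    (L : N →ₗ[R] M) (hinl : ∀ x, (x, 0) ∈ l ↔ x ∈ h) (hsnd : ∀ u ∈ l, u.2 ∈ S)
    (hgraph : ∀ ξ ∈ S, (L ξ, ξ) ∈ l) :
    (l : Set (M × N)) = {u | ∃ x ξ, x ∈ h ∧ ξ ∈ S ∧ u = (x + L ξ, ξ)} := by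
  ext u
  constructor
  · intro hu
    have hdiff : (u.1 - L u.2, 0) ∈ l := by
      convert l.sub_mem hu (hgraph u.2 (hsnd u hu)) using 1
      ext <;> simp
    exact ⟨u.1 - L u.2, u.2, (hinl _).1 hdiff, hsnd u hu, by simp⟩
  · rintro ⟨x, ξ, hx, hξ, rfl⟩
    convert l.add_mem ((hinl x).2 hx) (hgraph ξ hξ) using 1
    simp

end Submodule

theorem snd_mem_dualAnnihilator_of_isotropic {R M : Type*} [CommRing R] [AddCommGroup M]
    [Module R M] {l : Submodule R (M × Module.Dual R M)} {h : Submodule R M}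
    (hiso : ∀ u ∈ l, ∀ v ∈ l, u.2 v.1 + v.2 u.1 = 0) (hh : ∀ y ∈ h, (y, 0) ∈ l)
    {u : M × Module.Dual R M} (hu : u ∈ l) : u.2 ∈ h.dualAnnihilator := by
  rw [Submodule.mem_dualAnnihilator]
  intro y hy
  simpa using hiso u hu (y, 0) (hh y hy)

theorem lagrangian_subspace_from_Lambda_general
    (g : Type) [AddCommGroup g] [Module ℝ g]
    (h : Submodule ℝ g)
    (l : Submodule ℝ (g × Module.Dual ℝ g))
    -- `l` is Lagrangian
    (hiso : ∀ u ∈ l, ∀ v ∈ l, u.2 v.1 + v.2 u.1 = 0)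
    -- `l ∩ g = h`
    (hlg : l ⊓ LinearMap.ker (LinearMap.snd ℝ g (Module.Dual ℝ g)) =
      h.map (LinearMap.inl ℝ g (Module.Dual ℝ g)))
    -- `Λ` as a skew-symmetric contraction map `L ξ = Λξ`
    (L : Module.Dual ℝ g →ₗ[ℝ] g)
    -- the image of `Λ` in `∧²(g/h)` corresponds to `l`
    (hcorr : ∀ ξ : Module.Dual ℝ g, (∀ x ∈ h, ξ x = 0) → (L ξ, ξ) ∈ l) :
    (l : Set (g × Module.Dual ℝ g)) =
      {u | ∃ (x : g) (ξ : Module.Dual ℝ g),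
        x ∈ h ∧ (∀ y ∈ h, ξ y = 0) ∧ u = (x + L ξ, ξ)} := by
  have hinl := Submodule.inl_mem_iff_of_inf_ker_snd_eq hlg
  have hsnd : ∀ u ∈ l, u.2 ∈ h.dualAnnihilator := fun _ ↦
    snd_mem_dualAnnihilator_of_isotropic hiso fun y ↦ (hinl y).2
  simpa only [Submodule.mem_dualAnnihilator] using
    l.coe_eq_inl_add_graph h h.dualAnnihilator L hinl hsnd
      (fun ξ hξ ↦ hcorr ξ ((Submodule.mem_dualAnnihilator _).1 hξ))

/-- Every Lagrangian subspace `l` of `d = g ⊕ g*` (with respect to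
`⟨x+ξ, y+η⟩ = ξ(y)+η(x)`) with `l ∩ g = h` has the form
`l = {x + Λξ + ξ : x ∈ h, ξ ∈ h⁰}` for any `Λ ∈ ∧²g` (encoded as a skew linear map
`L : g* → g`, `L ξ = ι_ξ Λ = Λξ`) whose image in `∧²(g/h)` corresponds to `l`,
the latter condition being expressed by `Λξ + ξ ∈ l` for all `ξ ∈ h⁰`. -/
theorem lagrangian_subspace_from_Lambda
    (g : Type) [AddCommGroup g] [Module ℝ g] [FiniteDimensional ℝ g]
    (h : Submodule ℝ g)
    (l : Submodule ℝ (g × Module.Dual ℝ g))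
    -- `l` is Lagrangian
    (hiso : ∀ u ∈ l, ∀ v ∈ l, u.2 v.1 + v.2 u.1 = 0)
    (hdim : Module.finrank ℝ l = Module.finrank ℝ g)
    -- `l ∩ g = h`
    (hlg : l ⊓ LinearMap.ker (LinearMap.snd ℝ g (Module.Dual ℝ g)) =
      h.map (LinearMap.inl ℝ g (Module.Dual ℝ g)))
    -- `Λ` as a skew-symmetric contraction map `L ξ = Λξ`
    (L : Module.Dual ℝ g →ₗ[ℝ] g)
    (hLskew : ∀ ξ η : Module.Dual ℝ g, ξ (L η) = - η (L ξ))
    -- the image of `Λ` in `∧²(g/h)` corresponds to `l`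
    (hcorr : ∀ ξ : Module.Dual ℝ g, (∀ x ∈ h, ξ x = 0) → (L ξ, ξ) ∈ l) :
    (l : Set (g × Module.Dual ℝ g)) =
      {u | ∃ (x : g) (ξ : Module.Dual ℝ g),
        x ∈ h ∧ (∀ y ∈ h, ξ y = 0) ∧ u = (x + L ξ, ξ)} :=
  lagrangian_subspace_from_Lambda_general g h l hiso hlg L hcorr
end

section
/- Let l be a Lagrangian subalgebra of the double d of a Lie bialgebra (g, δ) with l ∩ g = h, and suppose [h, l] ⊆ l. Then h⁰ = {ξ ∈ g* : ξ|_h = 0} is closed under the bracket [ξ,η]_Λ := [ξ,η] + ad*_{Λξ} η − ad*_{Λη} ξ on g*, where Λ ∈ ∧²g is any element with l = {x + Λξ + ξ : x ∈ h, ξ ∈ h⁰}. -/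
/-!
The `Λ`-bracket of `ξ` and `η` is the `g*`-component of the double bracket of the graph
elements `(Λξ, ξ)` and `(Λη, η)`, which lie in `l`. As `l` is a subalgebra, their bracket lies
in `l` again, and every element of `l` has its `g*`-component in `h⁰`.
-/

section GraphOverSubset

variable {M N : Type*} {l : Set (M × N)} {h : Set M} {L : N → M} {P : N → Prop}

theorem graph_mem_of_eq_setOf [AddZeroClass M]
    (hl : l = {u | ∃ x ∈ h, ∃ ξ, P ξ ∧ u = (x + L ξ, ξ)}) (h0 : (0 : M) ∈ h) {ξ : N}
    (hξ : P ξ) : (L ξ, ξ) ∈ l :=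
  hl ▸ ⟨0, h0, ξ, hξ, by rw [zero_add]⟩

theorem snd_of_mem_eq_setOf [Add M]
    (hl : l = {u | ∃ x ∈ h, ∃ ξ, P ξ ∧ u = (x + L ξ, ξ)}) {u : M × N} (hu : u ∈ l) :
    P u.2 := by
  rw [hl] at hu
  obtain ⟨_, _, ξ, hξ, rfl⟩ := hu
  exact hξ

end GraphOverSubset

theorem h0_closed_under_Lambda_bracket_general
    (g gs : Type) [LieRing g] [LieAlgebra ℝ g] [LieRing gs] [LieAlgebra ℝ gs]
    (p : g →ₗ[ℝ] gs →ₗ[ℝ] ℝ)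
    (coadg : g →ₗ[ℝ] gs →ₗ[ℝ] gs)
    (coadgs : gs →ₗ[ℝ] g →ₗ[ℝ] g) :
    -- the Drinfeld double bracket and pairing on `d = g × gs`
    let Bd : g × gs → g × gs → g × gs := fun u v =>
      (⁅u.1, v.1⁆ + coadgs u.2 v.1 - coadgs v.2 u.1,
       ⁅u.2, v.2⁆ + coadg u.1 v.2 - coadg v.1 u.2)
    let pr : g × gs → g × gs → ℝ := fun u v => p v.1 u.2 + p u.1 v.2
    ∀ (l : Submodule ℝ (g × gs)) (hsub : Submodule ℝ g) (L : gs →ₗ[ℝ] g),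
      -- `l` is Lagrangian
      (∀ u ∈ l, ∀ v ∈ l, pr u v = 0) →
      Module.finrank ℝ l = Module.finrank ℝ g →
      -- `l` is a Lie subalgebra of `d`
      (∀ u ∈ l, ∀ v ∈ l, Bd u v ∈ l) →
      -- `h = l ∩ g`
      (∀ x : g, x ∈ hsub ↔ ((x, 0) : g × gs) ∈ l) →
      -- `[h, l] ⊆ l`
      (∀ x ∈ hsub, ∀ u ∈ l, Bd ((x, 0) : g × gs) u ∈ l) →
      -- `Λ` is skew
      (∀ ξ η : gs, p (L ξ) η = - p (L η) ξ) →
      -- `l = {x + Λξ + ξ : x ∈ h, ξ ∈ h⁰}`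
      ((l : Set (g × gs)) = {u | ∃ x ∈ hsub, ∃ ξ : gs,
          (∀ y ∈ hsub, p y ξ = 0) ∧ u = (x + L ξ, ξ)}) →
      -- conclusion: `h⁰` is closed under `[·,·]_Λ`
      ∀ ξ η : gs, (∀ x ∈ hsub, p x ξ = 0) → (∀ x ∈ hsub, p x η = 0) →
        ∀ x ∈ hsub, p x (⁅ξ, η⁆ + coadg (L ξ) η - coadg (L η) ξ) = 0 := by
  intro Bd pr l hsub L _ _ hbr _ _ _ hdesc ξ η hξ hη
  have hbracket := hbr _ (graph_mem_of_eq_setOf hdesc hsub.zero_mem hξ) _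
    (graph_mem_of_eq_setOf hdesc hsub.zero_mem hη)
  exact snd_of_mem_eq_setOf hdesc hbracket

/-- Let `l` be a Lagrangian subalgebra of the double `d = g ⊕ g*` of a
Lie bialgebra `(g, δ)` with `l ∩ g = h` and `[h, l] ⊆ l`.  Then
`h⁰ = {ξ ∈ g* : ξ|_h = 0}` is closed under the bracket
`[ξ,η]_Λ := [ξ,η] + ad*_{Λξ} η − ad*_{Λη} ξ` on `g*`, where `Λ ∈ ∧²g` (encoded as a
skew map `L`, `L ξ = Λξ = ι_ξΛ`) is any element with
`l = {x + Λξ + ξ : x ∈ h, ξ ∈ h⁰}`. -/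
theorem h0_closed_under_Lambda_bracket
    (g gs : Type) [LieRing g] [LieAlgebra ℝ g] [LieRing gs] [LieAlgebra ℝ gs]
    [FiniteDimensional ℝ g] [FiniteDimensional ℝ gs]
    (p : g →ₗ[ℝ] gs →ₗ[ℝ] ℝ)
    (hp1 : ∀ x : g, (∀ ξ : gs, p x ξ = 0) → x = 0)
    (hp2 : ∀ ξ : gs, (∀ x : g, p x ξ = 0) → ξ = 0)
    (coadg : g →ₗ[ℝ] gs →ₗ[ℝ] gs)
    (hcoadg : ∀ (x y : g) (ξ : gs), p y (coadg x ξ) = p ⁅y, x⁆ ξ)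
    (coadgs : gs →ₗ[ℝ] g →ₗ[ℝ] g)
    (hcoadgs : ∀ (ξ η : gs) (x : g), p (coadgs ξ x) η = p x ⁅η, ξ⁆)
    (hcocycle : ∀ (x y : g) (ξ η : gs),
      p ⁅x, y⁆ ⁅ξ, η⁆ =
        - p y ⁅coadg x ξ, η⁆ - p y ⁅ξ, coadg x η⁆
        + p x ⁅coadg y ξ, η⁆ + p x ⁅ξ, coadg y η⁆) :
    -- the Drinfeld double bracket and pairing on `d = g × gs`
    let Bd : g × gs → g × gs → g × gs := fun u v =>
      (⁅u.1, v.1⁆ + coadgs u.2 v.1 - coadgs v.2 u.1,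
       ⁅u.2, v.2⁆ + coadg u.1 v.2 - coadg v.1 u.2)
    let pr : g × gs → g × gs → ℝ := fun u v => p v.1 u.2 + p u.1 v.2
    ∀ (l : Submodule ℝ (g × gs)) (hsub : Submodule ℝ g) (L : gs →ₗ[ℝ] g),
      -- `l` is Lagrangian
      (∀ u ∈ l, ∀ v ∈ l, pr u v = 0) →
      Module.finrank ℝ l = Module.finrank ℝ g →
      -- `l` is a Lie subalgebra of `d`
      (∀ u ∈ l, ∀ v ∈ l, Bd u v ∈ l) →
      -- `h = l ∩ g`
      (∀ x : g, x ∈ hsub ↔ ((x, 0) : g × gs) ∈ l) →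
      -- `[h, l] ⊆ l`
      (∀ x ∈ hsub, ∀ u ∈ l, Bd ((x, 0) : g × gs) u ∈ l) →
      -- `Λ` is skew
      (∀ ξ η : gs, p (L ξ) η = - p (L η) ξ) →
      -- `l = {x + Λξ + ξ : x ∈ h, ξ ∈ h⁰}`
      ((l : Set (g × gs)) = {u | ∃ x ∈ hsub, ∃ ξ : gs,
          (∀ y ∈ hsub, p y ξ = 0) ∧ u = (x + L ξ, ξ)}) →
      -- conclusion: `h⁰` is closed under `[·,·]_Λ`
      ∀ ξ η : gs, (∀ x ∈ hsub, p x ξ = 0) → (∀ x ∈ hsub, p x η = 0) →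
        ∀ x ∈ hsub, p x (⁅ξ, η⁆ + coadg (L ξ) η - coadg (L η) ξ) = 0 :=
  h0_closed_under_Lambda_bracket_general g gs p coadg coadgs
end

section
/- With notation as in the Drinfeld correspondence, let χ_{h⁰,Λ}(ξ) = tr(T_ξ) where T_ξ ∈ End(h⁰) is η ↦ [ξ,η]_Λ, let χ_l, χ_g, χ_{g*} be the adjoint characters (traces of the adjoint representations) of l, g, g*, and let bΛ = Σ_i [x_i, y_i] if Λ = Σ_i x_i ∧ y_i. Then for every ξ ∈ h⁰: χ_{h⁰,Λ}(ξ) + (bΛ, ξ) = ½(χ_l(Λξ + ξ) − χ_g(Λξ) + χ_{g*}(ξ)). -/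
/-!
Identify `l` with `h × h⁰` through `(x, η) ↦ (x + Λη, η)`. In these coordinates the diagonal
blocks of `ad (Λξ + ξ)` on `l` are `T_ξ` on `h⁰` and the restriction to `h` of
`A_ξ = ad (Λξ) + ad*_ξ + Λ ∘ ad*_(·) ξ` on `g`, so `χ_l(Λξ + ξ) = tr (A_ξ|h) + tr T_ξ`.
Since `h⁰` is the dual of `g ⧸ h` and `T_ξ` is minus the transpose of the map induced by `A_ξ`,
`tr T_ξ = tr (A_ξ|h) - tr A_ξ`. Finally, in dual bases, `tr A_ξ = χ_g(Λξ) - χ_{g*}(ξ) + 2 (bΛ, ξ)`,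
and the identity is a linear combination of these three equations.
-/

open LinearMap Module

section DualBases

variable {R M N ι : Type*} [CommRing R] [AddCommGroup M] [Module R M] [AddCommGroup N]
  [Module R N] [Fintype ι] [DecidableEq ι] {p : M →ₗ[R] N →ₗ[R] R}
  {b : Basis ι R M} {b' : Basis ι R N}

theorem pairing_basis_right (hdual : ∀ i j, p (b i) (b' j) = if i = j then 1 else 0)
    (x : M) (i : ι) : p x (b' i) = b.repr x i := by
  conv_lhs => rw [← b.sum_repr x]
  simp only [map_sum, map_smul, LinearMap.sum_apply, LinearMap.smul_apply, hdual]
  simp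

theorem pairing_basis_left (hdual : ∀ i j, p (b i) (b' j) = if i = j then 1 else 0)
    (η : N) (i : ι) : p (b i) η = b'.repr η i := by
  conv_lhs => rw [← b'.sum_repr η]
  simp only [map_sum, map_smul, hdual]
  simp

theorem sum_pairing_smul_basis_left (hdual : ∀ i j, p (b i) (b' j) = if i = j then 1 else 0)
    (x : M) : ∑ i, p x (b' i) • b i = x := by
  simp_rw [pairing_basis_right hdual, b.sum_repr]

theorem eq_zero_of_forall_pairing_eq_zero
    (hdual : ∀ i j, p (b i) (b' j) = if i = j then 1 else 0) {η : N}
    (h : ∀ x, p x η = 0) : η = 0 :=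
  b'.ext_elem fun i => by simp [← pairing_basis_left hdual, h]

theorem trace_eq_sum_pairing_left (hdual : ∀ i j, p (b i) (b' j) = if i = j then 1 else 0)
    (f : M →ₗ[R] M) : trace R M f = ∑ i, p (f (b i)) (b' i) := by
  simp [trace_eq_matrix_trace R b, Matrix.trace, toMatrix_apply, pairing_basis_right hdual]

theorem trace_eq_sum_pairing_right (hdual : ∀ i j, p (b i) (b' j) = if i = j then 1 else 0)
    (f : N →ₗ[R] N) : trace R N f = ∑ i, p (b i) (f (b' i)) := by
  simp [trace_eq_matrix_trace R b', Matrix.trace, toMatrix_apply, pairing_basis_left hdual]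

theorem trace_eq_of_pairing_adjoint (hdual : ∀ i j, p (b i) (b' j) = if i = j then 1 else 0)
    {f : M →ₗ[R] M} {f' : N →ₗ[R] N} (h : ∀ x η, p (f x) η = p x (f' η)) :
    trace R M f = trace R N f' := by
  simp only [trace_eq_sum_pairing_left hdual, trace_eq_sum_pairing_right hdual, h]

theorem exists_pairing_adjoint (hdual : ∀ i j, p (b i) (b' j) = if i = j then 1 else 0)
    (f : M →ₗ[R] M) : ∃ f' : N →ₗ[R] N, ∀ x η, p (f x) η = p x (f' η) := by
  refine ⟨∑ i, (p (f (b i))).smulRight (b' i), fun x η => ?_⟩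
  conv_lhs => rw [← sum_pairing_smul_basis_left hdual x]
  simp [mul_comm]

end DualBases

section Annihilator

variable {K M N ι : Type*} [Field K] [AddCommGroup M] [Module K M] [AddCommGroup N]
  [Module K N]

theorem trace_restrict_eq_trace_comp [FiniteDimensional K M] {S : Submodule K M}
    {f P : M →ₗ[K] M} (hf : ∀ x ∈ S, f x ∈ S) (hP : IsProj S P) :
    trace K S (f.restrict hf) = trace K M (f ∘ₗ P) := by
  have hfP : f.restrict hf = hP.codRestrict ∘ₗ f ∘ₗ S.subtype := by
    ext x
    simp [hP.map_id _ (hf x x.2)]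
  rw [hfP, trace_comp_comm', comp_assoc, hP.subtype_comp_codRestrict]

variable [Fintype ι] [DecidableEq ι] {p : M →ₗ[K] N →ₗ[K] K}
  {b : Basis ι K M} {b' : Basis ι K N}

def pairingAnnihilator (p : M →ₗ[K] N →ₗ[K] K) (S : Submodule K M) : Submodule K N :=
  ⨅ x ∈ S, ker (p x)

theorem mem_pairingAnnihilator {S : Submodule K M} {η : N} :
    η ∈ pairingAnnihilator p S ↔ ∀ x ∈ S, p x η = 0 := by
  simp [pairingAnnihilator]

theorem exists_isProj_pairingAnnihilator
    (hdual : ∀ i j, p (b i) (b' j) = if i = j then 1 else 0)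
    {S : Submodule K M} {P : M →ₗ[K] M} (hP : IsProj S P) :
    ∃ Q : N →ₗ[K] N, IsProj (pairingAnnihilator p S) Q ∧ ∀ x η, p x (Q η) = p (x - P x) η := by
  obtain ⟨P', hP'⟩ := exists_pairing_adjoint hdual P
  set Q : N →ₗ[K] N := LinearMap.id - P'
  have hQ : ∀ x η, p x (Q η) = p (x - P x) η := by
    simp [Q, hP']
  refine ⟨Q, ⟨fun η => ?_, fun η hη => ?_⟩, hQ⟩
  · refine mem_pairingAnnihilator.2 fun x hx => ?_
    rw [hQ, hP.map_id x hx, sub_self, map_zero, LinearMap.zero_apply]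
  · have : P' η = 0 := eq_zero_of_forall_pairing_eq_zero hdual fun x => by
      rw [← hP', mem_pairingAnnihilator.1 hη _ (hP.map_mem x)]
    simp [Q, this]

theorem trace_restrict_pairingAnnihilator [FiniteDimensional K M] [FiniteDimensional K N]
    (hdual : ∀ i j, p (b i) (b' j) = if i = j then 1 else 0)
    {S : Submodule K M} {f : M →ₗ[K] M} {T : N →ₗ[K] N} (hf : ∀ x ∈ S, f x ∈ S)
    (hT : ∀ η ∈ pairingAnnihilator p S, T η ∈ pairingAnnihilator p S)
    (hfT : ∀ x, ∀ η ∈ pairingAnnihilator p S, p x (T η) = -p (f x) η) :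
    trace K (pairingAnnihilator p S) (T.restrict hT)
      = trace K S (f.restrict hf) - trace K M f := by
  obtain ⟨C, hC⟩ := S.exists_isCompl
  have hP : IsProj S (S.projection C hC) :=
    ⟨Submodule.projection_apply_mem hC, fun _ => Submodule.projection_apply_of_mem_left hC⟩
  obtain ⟨Q, hQ, hpQ⟩ := exists_isProj_pairingAnnihilator hdual hP
  have hadj : ∀ x η, p ((S.projection C hC ∘ₗ f - f) x) η = p x ((T ∘ₗ Q) η) := by
    intro x η
    rw [comp_apply, hfT x _ (hQ.map_mem η), hpQ]
    simp
  rw [trace_restrict_eq_trace_comp hT hQ, trace_restrict_eq_trace_comp hf hP,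
    ← trace_eq_of_pairing_adjoint hdual hadj, map_sub, trace_comp_comm']

end Annihilator

section Graph

variable {K M N : Type*} [Field K] [AddCommGroup M] [Module K M] [AddCommGroup N] [Module K N]

theorem trace_prod_eq_trace_fst_add_trace_snd [FiniteDimensional K M] [FiniteDimensional K N]
    (F : (M × N) →ₗ[K] (M × N)) :
    trace K (M × N) F = trace K M (fst K M N ∘ₗ F ∘ₗ inl K M N)
      + trace K N (snd K M N ∘ₗ F ∘ₗ inr K M N) := by
  have hF : F = inl K M N ∘ₗ (fst K M N ∘ₗ F) + inr K M N ∘ₗ (snd K M N ∘ₗ F) := by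
    ext <;> simp
  conv_lhs => rw [hF]
  rw [map_add, trace_comp_comm', trace_comp_comm' _ (inr K M N), comp_assoc, comp_assoc]

variable {H : Submodule K M} {S : Submodule K N} {L : N →ₗ[K] M} {l : Submodule K (M × N)}

theorem mem_iff_of_eq_graph
    (hl : (l : Set (M × N)) = {u | ∃ x ∈ H, ∃ η ∈ S, u = (x + L η, η)}) {u : M × N} :
    u ∈ l ↔ u.1 - L u.2 ∈ H ∧ u.2 ∈ S := by
  rw [← SetLike.mem_coe, hl]
  constructor
  · rintro ⟨x, hx, η, hη, rfl⟩
    simpa using ⟨hx, hη⟩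
  · rintro ⟨hx, hη⟩
    exact ⟨_, hx, _, hη, by simp⟩

theorem trace_restrict_of_eq_graph [FiniteDimensional K M] [FiniteDimensional K N]
    (hl : (l : Set (M × N)) = {u | ∃ x ∈ H, ∃ η ∈ S, u = (x + L η, η)})
    {D : (M × N) →ₗ[K] (M × N)} (hD : ∀ u ∈ l, D u ∈ l)
    {f : M →ₗ[K] M} (hf : ∀ x ∈ H, f x ∈ H)
    (hfD : ∀ x ∈ H, f x = (D (x, 0)).1 - L (D (x, 0)).2)
    {T : N →ₗ[K] N} (hT : ∀ η ∈ S, T η ∈ S) (hTD : ∀ η ∈ S, T η = (D (L η, η)).2) :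
    trace K l (D.restrict hD) = trace K H (f.restrict hf) + trace K S (T.restrict hT) := by
  let e : l ≃ₗ[K] H × S :=
    { toFun := fun u => (⟨u.1.1 - L u.1.2, ((mem_iff_of_eq_graph hl).1 u.2).1⟩,
        ⟨u.1.2, ((mem_iff_of_eq_graph hl).1 u.2).2⟩)
      invFun := fun v => ⟨(v.1.1 + L v.2.1, v.2.1), (mem_iff_of_eq_graph hl).2 (by simp)⟩
      map_add' := fun u v => by
        ext <;> simp only [Submodule.coe_add, Prod.fst_add, Prod.snd_add, map_add]; abel
      map_smul' := fun c u => by ext <;> simp [smul_sub]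
      left_inv := fun u => by ext <;> simp
      right_inv := fun v => by ext <;> simp }
  rw [← trace_conj' _ e, trace_prod_eq_trace_fst_add_trace_snd]
  congr 2
  · ext x
    simp [e, LinearEquiv.conj_apply, hfD x x.2]
  · ext η
    simp [e, LinearEquiv.conj_apply, hTD η η.2]

end Graph

section Coadjoint

variable {R g gs ι : Type*} [CommRing R] [LieRing g] [LieAlgebra R g] [LieRing gs]
  [LieAlgebra R gs] {p : g →ₗ[R] gs →ₗ[R] R}
  {coadg : g →ₗ[R] gs →ₗ[R] gs} {coadgs : gs →ₗ[R] g →ₗ[R] g} {L : gs →ₗ[R] g}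

theorem pairing_twistedBracket_eq_neg_pairing
    (hcoadg : ∀ (x y : g) (ξ : gs), p y (coadg x ξ) = p ⁅y, x⁆ ξ)
    (hcoadgs : ∀ (ξ η : gs) (x : g), p (coadgs ξ x) η = p x ⁅η, ξ⁆)
    (hL : ∀ ξ η : gs, p (L ξ) η = -p (L η) ξ) (ξ η : gs) (y : g) :
    p y (⁅ξ, η⁆ + coadg (L ξ) η - coadg (L η) ξ)
      = -p (⁅L ξ, y⁆ + coadgs ξ y + L (coadg y ξ)) η := by
  have h₁ : p y ⁅ξ, η⁆ = -p (coadgs ξ y) η := by rw [hcoadgs, ← lie_skew, map_neg]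
  have h₂ : p y (coadg (L ξ) η) = -p ⁅L ξ, y⁆ η := by
    rw [hcoadg, ← lie_skew, map_neg, LinearMap.neg_apply]
  have h₃ : p y (coadg (L η) ξ) = p (L (coadg y ξ)) η := by
    rw [hcoadg, ← lie_skew, map_neg, LinearMap.neg_apply, ← hcoadg, hL, neg_neg]
  simp only [map_add, map_sub, LinearMap.add_apply, h₁, h₂, h₃]
  ring

variable [Fintype ι] [DecidableEq ι] {b : Basis ι R g} {b' : Basis ι R gs}

theorem trace_coadjoint_eq_neg_trace_ad
    (hdual : ∀ i j, p (b i) (b' j) = if i = j then 1 else 0)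
    (hcoadgs : ∀ (ξ η : gs) (x : g), p (coadgs ξ x) η = p x ⁅η, ξ⁆) (ξ : gs) :
    trace R g (coadgs ξ) = -trace R gs (LieAlgebra.ad R gs ξ) := by
  rw [← map_neg]
  exact trace_eq_of_pairing_adjoint hdual fun x η => by
    rw [hcoadgs, LinearMap.neg_apply, LieAlgebra.ad_apply, lie_skew]

theorem trace_comp_coadjoint_flip
    (hdual : ∀ i j, p (b i) (b' j) = if i = j then 1 else 0)
    (hcoadg : ∀ (x y : g) (ξ : gs), p y (coadg x ξ) = p ⁅y, x⁆ ξ)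
    (hL : ∀ ξ η : gs, p (L ξ) η = -p (L η) ξ) (ξ : gs) :
    trace R g (L ∘ₗ coadg.flip ξ) = p (∑ i, ⁅b i, L (b' i)⁆) ξ := by
  rw [trace_eq_sum_pairing_left hdual, map_sum, LinearMap.sum_apply]
  refine Finset.sum_congr rfl fun i _ => ?_
  rw [comp_apply, flip_apply, hL, hcoadg, ← lie_skew, map_neg, LinearMap.neg_apply, neg_neg]

end Coadjoint

theorem character_identity_on_h0_general
    (g gs : Type) [LieRing g] [LieAlgebra ℝ g] [LieRing gs] [LieAlgebra ℝ gs]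
    [FiniteDimensional ℝ g] [FiniteDimensional ℝ gs]
    (p : g →ₗ[ℝ] gs →ₗ[ℝ] ℝ)
    (coadg : g →ₗ[ℝ] gs →ₗ[ℝ] gs)
    (hcoadg : ∀ (x y : g) (ξ : gs), p y (coadg x ξ) = p ⁅y, x⁆ ξ)
    (coadgs : gs →ₗ[ℝ] g →ₗ[ℝ] g)
    (hcoadgs : ∀ (ξ η : gs) (x : g), p (coadgs ξ x) η = p x ⁅η, ξ⁆)
    -- dual bases of `g` and `gs`
    (n : ℕ) (bg : Module.Basis (Fin n) ℝ g) (bgs : Module.Basis (Fin n) ℝ gs)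
    (hdual : ∀ i j, p (bg i) (bgs j) = if i = j then (1:ℝ) else 0) :
    -- the adjoint operator of the double bracket, `Dop u = [u, ·]_d`
    let fstm := LinearMap.fst ℝ g gs
    let sndm := LinearMap.snd ℝ g gs
    let Dop : g × gs → ((g × gs) →ₗ[ℝ] (g × gs)) := fun u =>
      (((LieAlgebra.ad ℝ g u.1 : g →ₗ[ℝ] g) ∘ₗ fstm) + ((coadgs u.2) ∘ₗ fstm)
          - ((coadgs.flip u.1) ∘ₗ sndm)).prod
        (((LieAlgebra.ad ℝ gs u.2 : gs →ₗ[ℝ] gs) ∘ₗ sndm) + ((coadg u.1) ∘ₗ sndm)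
          - ((coadg.flip u.2) ∘ₗ fstm))
    ∀ (hsub : Submodule ℝ g) (l : Submodule ℝ (g × gs)) (L : gs →ₗ[ℝ] g),
      -- `h⁰`, the annihilator of `h` in `gs`
      let h0 : Submodule ℝ gs := ⨅ x ∈ hsub, LinearMap.ker (p x)
      -- `T_ξ : η ↦ [ξ,η]_Λ = [ξ,η] + ad*_{Λξ}η − ad*_{Λη}ξ`
      let TLam : gs → (gs →ₗ[ℝ] gs) := fun ξ =>
        (LieAlgebra.ad ℝ gs ξ : gs →ₗ[ℝ] gs) + coadg (L ξ) - (coadg ∘ₗ L).flip ξ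
      -- `bΛ`, computed from `Λ = ½ Σ x_i ∧ (Λξ_i)`
      let bLam : g := (2:ℝ)⁻¹ • ∑ i : Fin n, ⁅bg i, L (bgs i)⁆
      -- `Λ` skew
      (∀ ξ η : gs, p (L ξ) η = - p (L η) ξ) →
      -- `l` Lagrangian
      (∀ u ∈ l, ∀ v ∈ l, p v.1 u.2 + p u.1 v.2 = 0) →
      Module.finrank ℝ l = Module.finrank ℝ g →
      -- `h = l ∩ g`
      (∀ x : g, x ∈ hsub ↔ ((x, 0) : g × gs) ∈ l) →
      -- `l = {x + Λξ + ξ : x ∈ h, ξ ∈ h⁰}`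
      ((l : Set (g × gs)) = {u | ∃ x ∈ hsub, ∃ ξ ∈ h0, u = (x + L ξ, ξ)}) →
      ∀ (hsubalg : ∀ u ∈ l, ∀ v ∈ l, Dop u v ∈ l)
        (hmem : ∀ ξ ∈ h0, ((L ξ, ξ) : g × gs) ∈ l)
        (hTpres : ∀ ξ ∈ h0, ∀ η ∈ h0, TLam ξ η ∈ h0),
      ∀ (ξ : gs) (hξ : ξ ∈ h0),
        LinearMap.trace ℝ h0 ((TLam ξ).restrict (hTpres ξ hξ)) + p bLam ξ
          = (1/2 : ℝ) *
            (LinearMap.trace ℝ l ((Dop (L ξ, ξ)).restrict (hsubalg (L ξ, ξ) (hmem ξ hξ)))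
              - LinearMap.trace ℝ g (LieAlgebra.ad ℝ g (L ξ) : g →ₗ[ℝ] g)
              + LinearMap.trace ℝ gs (LieAlgebra.ad ℝ gs ξ : gs →ₗ[ℝ] gs)) := by

  intro fstm sndm Dop hsub l L h0 TLam bLam hL _ _ _ hl hsubalg hmem hTpres ξ hξ
  set A : g →ₗ[ℝ] g := LieAlgebra.ad ℝ g (L ξ) + coadgs ξ + L ∘ₗ coadg.flip ξ
  have hAD : ∀ x ∈ hsub, A x = (Dop (L ξ, ξ) (x, 0)).1 - L (Dop (L ξ, ξ) (x, 0)).2 := by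
    intro x _
    simp [A, Dop, fstm, sndm]
  have hA : ∀ x ∈ hsub, A x ∈ hsub := fun x hx => by
    have hxl : ((x, 0) : g × gs) ∈ l := (mem_iff_of_eq_graph hl).2 (by simpa using hx)
    rw [hAD x hx]
    exact ((mem_iff_of_eq_graph hl).1 (hsubalg _ (hmem ξ hξ) _ hxl)).1
  have htr_l := trace_restrict_of_eq_graph hl (hsubalg _ (hmem ξ hξ)) hA hAD (hTpres ξ hξ)
    fun η _ => rfl
  have htr_h0 : LinearMap.trace ℝ h0 ((TLam ξ).restrict (hTpres ξ hξ))
      = LinearMap.trace ℝ hsub (A.restrict hA) - LinearMap.trace ℝ g A :=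
    trace_restrict_pairingAnnihilator hdual hA (hTpres ξ hξ)
      fun y η _ => pairing_twistedBracket_eq_neg_pairing hcoadg hcoadgs hL ξ η y
  have htr_A : LinearMap.trace ℝ g A = LinearMap.trace ℝ g (LieAlgebra.ad ℝ g (L ξ))
      - LinearMap.trace ℝ gs (LieAlgebra.ad ℝ gs ξ) + 2 * p bLam ξ := by
    simp only [A, bLam, map_add, trace_coadjoint_eq_neg_trace_ad hdual hcoadgs,
      trace_comp_coadjoint_flip hdual hcoadg hL, map_smul, LinearMap.smul_apply, smul_eq_mul]
    ring
  rw [htr_l]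
  linarith

/-- With notation as in the Drinfeld correspondence (Lie bialgebra
`(g, δ)` with abstract dual `gs`, double `d = g × gs`, Lagrangian subalgebra `l` with
`l ∩ g = h` and `l = {x + Λξ + ξ : x ∈ h, ξ ∈ h⁰}` for `Λ ∈ ∧²g` encoded by the skew
map `L ξ = Λξ`): let `χ_{h⁰,Λ}(ξ) = tr(T_ξ)` where `T_ξ : h⁰ → h⁰`, `η ↦ [ξ,η]_Λ`;
let `χ_l, χ_g, χ_{g*}` be the adjoint characters of `l, g, g*`; and let
`bΛ = Σ [x_i, y_i]` for `Λ = Σ x_i ∧ y_i`.  Then for every `ξ ∈ h⁰`: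
`χ_{h⁰,Λ}(ξ) + (bΛ, ξ) = ½(χ_l(Λξ + ξ) − χ_g(Λξ) + χ_{g*}(ξ))`. -/
theorem character_identity_on_h0
    (g gs : Type) [LieRing g] [LieAlgebra ℝ g] [LieRing gs] [LieAlgebra ℝ gs]
    [FiniteDimensional ℝ g] [FiniteDimensional ℝ gs]
    (p : g →ₗ[ℝ] gs →ₗ[ℝ] ℝ)
    (hp1 : ∀ x : g, (∀ ξ : gs, p x ξ = 0) → x = 0)
    (hp2 : ∀ ξ : gs, (∀ x : g, p x ξ = 0) → ξ = 0)
    (coadg : g →ₗ[ℝ] gs →ₗ[ℝ] gs)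
    (hcoadg : ∀ (x y : g) (ξ : gs), p y (coadg x ξ) = p ⁅y, x⁆ ξ)
    (coadgs : gs →ₗ[ℝ] g →ₗ[ℝ] g)
    (hcoadgs : ∀ (ξ η : gs) (x : g), p (coadgs ξ x) η = p x ⁅η, ξ⁆)
    (hcocycle : ∀ (x y : g) (ξ η : gs),
      p ⁅x, y⁆ ⁅ξ, η⁆ =
        - p y ⁅coadg x ξ, η⁆ - p y ⁅ξ, coadg x η⁆
        + p x ⁅coadg y ξ, η⁆ + p x ⁅ξ, coadg y η⁆)
    -- dual bases of `g` and `gs`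
    (n : ℕ) (bg : Module.Basis (Fin n) ℝ g) (bgs : Module.Basis (Fin n) ℝ gs)
    (hdual : ∀ i j, p (bg i) (bgs j) = if i = j then (1:ℝ) else 0) :
    -- the adjoint operator of the double bracket, `Dop u = [u, ·]_d`
    let fstm := LinearMap.fst ℝ g gs
    let sndm := LinearMap.snd ℝ g gs
    let Dop : g × gs → ((g × gs) →ₗ[ℝ] (g × gs)) := fun u =>
      (((LieAlgebra.ad ℝ g u.1 : g →ₗ[ℝ] g) ∘ₗ fstm) + ((coadgs u.2) ∘ₗ fstm)
          - ((coadgs.flip u.1) ∘ₗ sndm)).prod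
        (((LieAlgebra.ad ℝ gs u.2 : gs →ₗ[ℝ] gs) ∘ₗ sndm) + ((coadg u.1) ∘ₗ sndm)
          - ((coadg.flip u.2) ∘ₗ fstm))
    ∀ (hsub : Submodule ℝ g) (l : Submodule ℝ (g × gs)) (L : gs →ₗ[ℝ] g),
      -- `h⁰`, the annihilator of `h` in `gs`
      let h0 : Submodule ℝ gs := ⨅ x ∈ hsub, LinearMap.ker (p x)
      -- `T_ξ : η ↦ [ξ,η]_Λ = [ξ,η] + ad*_{Λξ}η − ad*_{Λη}ξ`
      let TLam : gs → (gs →ₗ[ℝ] gs) := fun ξ =>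
        (LieAlgebra.ad ℝ gs ξ : gs →ₗ[ℝ] gs) + coadg (L ξ) - (coadg ∘ₗ L).flip ξ
      -- `bΛ`, computed from `Λ = ½ Σ x_i ∧ (Λξ_i)`
      let bLam : g := (2:ℝ)⁻¹ • ∑ i : Fin n, ⁅bg i, L (bgs i)⁆
      -- `Λ` skew
      (∀ ξ η : gs, p (L ξ) η = - p (L η) ξ) →
      -- `l` Lagrangian
      (∀ u ∈ l, ∀ v ∈ l, p v.1 u.2 + p u.1 v.2 = 0) →
      Module.finrank ℝ l = Module.finrank ℝ g →
      -- `h = l ∩ g`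
      (∀ x : g, x ∈ hsub ↔ ((x, 0) : g × gs) ∈ l) →
      -- `l = {x + Λξ + ξ : x ∈ h, ξ ∈ h⁰}`
      ((l : Set (g × gs)) = {u | ∃ x ∈ hsub, ∃ ξ ∈ h0, u = (x + L ξ, ξ)}) →
      ∀ (hsubalg : ∀ u ∈ l, ∀ v ∈ l, Dop u v ∈ l)
        (hmem : ∀ ξ ∈ h0, ((L ξ, ξ) : g × gs) ∈ l)
        (hTpres : ∀ ξ ∈ h0, ∀ η ∈ h0, TLam ξ η ∈ h0),
      ∀ (ξ : gs) (hξ : ξ ∈ h0),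
        LinearMap.trace ℝ h0 ((TLam ξ).restrict (hTpres ξ hξ)) + p bLam ξ
          = (1/2 : ℝ) *
            (LinearMap.trace ℝ l ((Dop (L ξ, ξ)).restrict (hsubalg (L ξ, ξ) (hmem ξ hξ)))
              - LinearMap.trace ℝ g (LieAlgebra.ad ℝ g (L ξ) : g →ₗ[ℝ] g)
              + LinearMap.trace ℝ gs (LieAlgebra.ad ℝ gs ξ : gs →ₗ[ℝ] gs)) :=
  character_identity_on_h0_general g gs p coadg hcoadg coadgs hcoadgs n bg bgs hdual
end

section
/- Let (g, δ) be a Lie bialgebra with double d = g ⊕ g*, and Λ ∈ ∧²g. Set g′ = {Λξ + ξ : ξ ∈ g*} ⊆ d. Then g′ is a Lagrangian subspace of d (with respect to ⟨x+ξ, y+η⟩ = ξ(y)+η(x)) complementary to g, and the element φ ∈ ∧³g defined by φ(ξ∧η∧ζ) = ⟨p₁[Λξ+ξ, Λη+η], Λζ+ζ⟩, where p₁: d → g is the projection along g′, equals ½[Λ,Λ] + δ(Λ), where [·,·] is the Schouten bracket on ∧g and δ is extended as a derivation. -/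
/-!
`g′` is the graph of the skew map `Λ`, so it is isotropic by skewness and has dimension
`dim g* = dim g` by nondegeneracy of the pairing; `(x, ξ) = (x - Λξ, 0) + (Λξ, ξ)` is the
decomposition along `g ⊕ g′`, whence `p₁(x, ξ) = x - Λξ`. The formula for `φ` follows by
expanding the double bracket of `Λξ + ξ` and `Λη + η` and moving every coadjoint action and
every `Λ` across the pairing.
-/

open LinearMap Module

section Pairing

variable {K M N : Type*} [Field K] [AddCommGroup M] [Module K M] [AddCommGroup N] [Module K N]

theorem finrank_eq_of_separatingLeft_of_separatingRight [FiniteDimensional K M]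
    {p : M →ₗ[K] N →ₗ[K] K} (hl : p.SeparatingLeft) (hr : p.SeparatingRight) :
    finrank K M = finrank K N :=
  have : p.IsPerfPair := .of_injective
    (ker_eq_bot.mp (separatingLeft_iff_ker_eq_bot.mp hl))
    (ker_eq_bot.mp (separatingRight_iff_flip_ker_eq_bot.mp hr))
  finrank_of_isPerfPair p

end Pairing

section Graph

variable {R M N : Type*} [CommRing R] [AddCommGroup M] [Module R M] [AddCommGroup N] [Module R N]

theorem finrank_range_prod_id (L : N →ₗ[R] M) :
    finrank R (range (L.prod id)) = finrank R N :=
  finrank_range_of_inj fun _ _ h => congrArg Prod.snd h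

theorem isCompl_ker_snd_range_prod_id (L : N →ₗ[R] M) :
    IsCompl (ker (snd R M N)) (range (L.prod id)) := by
  constructor
  · rw [Submodule.disjoint_def]
    rintro _ hu ⟨ξ, rfl⟩
    obtain rfl : ξ = 0 := hu
    simp
  · rw [codisjoint_iff, eq_top_iff]
    rintro ⟨x, ξ⟩ -
    have hsplit : ((x, ξ) : M × N) = (x - L ξ, 0) + (L ξ, ξ) := by ext <;> simp
    rw [hsplit]
    exact Submodule.add_mem_sup (by simp) ⟨ξ, rfl⟩

theorem isotropic_range_prod_id {p : M →ₗ[R] N →ₗ[R] R} {L : N →ₗ[R] M}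
    (hL : ∀ ξ η, p (L ξ) η = - p (L η) ξ) {u v : M × N}
    (hu : u ∈ range (L.prod id)) (hv : v ∈ range (L.prod id)) :
    p v.1 u.2 + p u.1 v.2 = 0 := by
  obtain ⟨ξ, rfl⟩ := hu
  obtain ⟨η, rfl⟩ := hv
  simp [hL η ξ]

end Graph

section DoubleBracket

variable {R g gs : Type*} [CommRing R] [LieRing g] [LieAlgebra R g] [LieRing gs] [LieAlgebra R gs]

theorem pairing_proj_doubleBracket_graph (p : g →ₗ[R] gs →ₗ[R] R)
    (coadg : g →ₗ[R] gs →ₗ[R] gs) (hcoadg : ∀ x y ξ, p y (coadg x ξ) = p ⁅y, x⁆ ξ)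
    (coadgs : gs →ₗ[R] g →ₗ[R] g) (hcoadgs : ∀ ξ η x, p (coadgs ξ x) η = p x ⁅η, ξ⁆)
    (L : gs →ₗ[R] g) (hL : ∀ ξ η, p (L ξ) η = - p (L η) ξ) (ξ η ζ : gs) :
    p (⁅L ξ, L η⁆ + coadgs ξ (L η) - coadgs η (L ξ)
        - L (⁅ξ, η⁆ + coadg (L ξ) η - coadg (L η) ξ)) ζ
      = p ⁅L ξ, L η⁆ ζ + p ⁅L η, L ζ⁆ ξ + p ⁅L ζ, L ξ⁆ η
        + p (L ξ) ⁅η, ζ⁆ + p (L η) ⁅ζ, ξ⁆ + p (L ζ) ⁅ξ, η⁆ :=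
  calc _ = p ⁅L ξ, L η⁆ ζ + p (coadgs ξ (L η)) ζ - p (coadgs η (L ξ)) ζ - p (L ⁅ξ, η⁆) ζ
        - p (L (coadg (L ξ) η)) ζ + p (L (coadg (L η) ξ)) ζ := by
          simp only [map_add, map_sub, LinearMap.add_apply, LinearMap.sub_apply]; ring
    _ = p ⁅L ξ, L η⁆ ζ + p (L η) ⁅ζ, ξ⁆ - p (L ξ) ⁅ζ, η⁆ + p (L ζ) ⁅ξ, η⁆
        + p ⁅L ζ, L ξ⁆ η - p ⁅L ζ, L η⁆ ξ := by
          rw [hcoadgs, hcoadgs, hL ⁅ξ, η⁆, hL (coadg _ η), hL (coadg _ ξ), hcoadg, hcoadg]; ring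
    _ = _ := by
          rw [← lie_skew ζ η, ← lie_skew (L η) (L ζ)]
          simp only [map_neg, LinearMap.neg_apply]
          ring

end DoubleBracket

theorem twisted_manin_quasi_triple_general
    (g gs : Type) [LieRing g] [LieAlgebra ℝ g] [LieRing gs] [LieAlgebra ℝ gs]
    [FiniteDimensional ℝ g]
    (p : g →ₗ[ℝ] gs →ₗ[ℝ] ℝ)
    (hp1 : ∀ x : g, (∀ ξ : gs, p x ξ = 0) → x = 0)
    (hp2 : ∀ ξ : gs, (∀ x : g, p x ξ = 0) → ξ = 0)
    (coadg : g →ₗ[ℝ] gs →ₗ[ℝ] gs)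
    (hcoadg : ∀ (x y : g) (ξ : gs), p y (coadg x ξ) = p ⁅y, x⁆ ξ)
    (coadgs : gs →ₗ[ℝ] g →ₗ[ℝ] g)
    (hcoadgs : ∀ (ξ η : gs) (x : g), p (coadgs ξ x) η = p x ⁅η, ξ⁆)
    (L : gs →ₗ[ℝ] g)
    (hLskew : ∀ ξ η : gs, p (L ξ) η = - p (L η) ξ) :
    -- the double bracket and pairing on `d = g × gs`
    let Bd : g × gs → g × gs → g × gs := fun u v =>
      (⁅u.1, v.1⁆ + coadgs u.2 v.1 - coadgs v.2 u.1,
       ⁅u.2, v.2⁆ + coadg u.1 v.2 - coadg v.1 u.2)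
    let pr : g × gs → g × gs → ℝ := fun u v => p v.1 u.2 + p u.1 v.2
    -- `g` and `g′ = {Λξ + ξ}` as subspaces of `d`, and the projection `p₁` along `g′`
    let gsub : Submodule ℝ (g × gs) := LinearMap.ker (LinearMap.snd ℝ g gs)
    let g'sub : Submodule ℝ (g × gs) := LinearMap.range (L.prod (LinearMap.id))
    let p1 : g × gs → g := fun u => u.1 - L u.2
    -- `g′` is Lagrangian and complementary to `g`
    (∀ u ∈ g'sub, ∀ v ∈ g'sub, pr u v = 0) ∧
    Module.finrank ℝ g'sub = Module.finrank ℝ g ∧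
    IsCompl gsub g'sub ∧
    -- `φ = ½[Λ,Λ] + δ(Λ)`
    (∀ ξ η ζ : gs,
      p (p1 (Bd (L ξ, ξ) (L η, η))) ζ
        = p ⁅L ξ, L η⁆ ζ + p ⁅L η, L ζ⁆ ξ + p ⁅L ζ, L ξ⁆ η
          + p (L ξ) ⁅η, ζ⁆ + p (L η) ⁅ζ, ξ⁆ + p (L ζ) ⁅ξ, η⁆) := by
  intro Bd pr gsub g'sub p1
  refine ⟨fun u hu v hv => isotropic_range_prod_id hLskew hu hv, ?_,
    isCompl_ker_snd_range_prod_id L,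
    pairing_proj_doubleBracket_graph p coadg hcoadg coadgs hcoadgs L hLskew⟩
  rw [finrank_range_prod_id, finrank_eq_of_separatingLeft_of_separatingRight hp1 hp2]

/-- Let `(g, δ)` be a Lie bialgebra with double `d = g ⊕ g*` and
`Λ ∈ ∧²g` (encoded by the skew map `L ξ = Λξ = ι_ξΛ`).  Set
`g′ = {Λξ + ξ : ξ ∈ g*} ⊆ d`.  Then `g′` is a Lagrangian subspace of `d`
complementary to `g`, and the element `φ ∈ ∧³g` defined by
`φ(ξ∧η∧ζ) = ⟨p₁[Λξ+ξ, Λη+η], Λζ+ζ⟩` (with `p₁ : d → g` the projection along `g′`)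
equals `½[Λ,Λ] + δ(Λ)`, i.e. is given on `ξ∧η∧ζ` by
`⟨[Λξ,Λη],ζ⟩ + ⟨[Λη,Λζ],ξ⟩ + ⟨[Λζ,Λξ],η⟩ + ⟨Λξ,[η,ζ]⟩ + ⟨Λη,[ζ,ξ]⟩ + ⟨Λζ,[ξ,η]⟩`. -/
theorem twisted_manin_quasi_triple
    (g gs : Type) [LieRing g] [LieAlgebra ℝ g] [LieRing gs] [LieAlgebra ℝ gs]
    [FiniteDimensional ℝ g] [FiniteDimensional ℝ gs]
    (p : g →ₗ[ℝ] gs →ₗ[ℝ] ℝ)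
    (hp1 : ∀ x : g, (∀ ξ : gs, p x ξ = 0) → x = 0)
    (hp2 : ∀ ξ : gs, (∀ x : g, p x ξ = 0) → ξ = 0)
    (coadg : g →ₗ[ℝ] gs →ₗ[ℝ] gs)
    (hcoadg : ∀ (x y : g) (ξ : gs), p y (coadg x ξ) = p ⁅y, x⁆ ξ)
    (coadgs : gs →ₗ[ℝ] g →ₗ[ℝ] g)
    (hcoadgs : ∀ (ξ η : gs) (x : g), p (coadgs ξ x) η = p x ⁅η, ξ⁆)
    (hcocycle : ∀ (x y : g) (ξ η : gs),
      p ⁅x, y⁆ ⁅ξ, η⁆ =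
        - p y ⁅coadg x ξ, η⁆ - p y ⁅ξ, coadg x η⁆
        + p x ⁅coadg y ξ, η⁆ + p x ⁅ξ, coadg y η⁆)
    (L : gs →ₗ[ℝ] g)
    (hLskew : ∀ ξ η : gs, p (L ξ) η = - p (L η) ξ) :
    -- the double bracket and pairing on `d = g × gs`
    let Bd : g × gs → g × gs → g × gs := fun u v =>
      (⁅u.1, v.1⁆ + coadgs u.2 v.1 - coadgs v.2 u.1,
       ⁅u.2, v.2⁆ + coadg u.1 v.2 - coadg v.1 u.2)
    let pr : g × gs → g × gs → ℝ := fun u v => p v.1 u.2 + p u.1 v.2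
    -- `g` and `g′ = {Λξ + ξ}` as subspaces of `d`, and the projection `p₁` along `g′`
    let gsub : Submodule ℝ (g × gs) := LinearMap.ker (LinearMap.snd ℝ g gs)
    let g'sub : Submodule ℝ (g × gs) := LinearMap.range (L.prod (LinearMap.id))
    let p1 : g × gs → g := fun u => u.1 - L u.2
    -- `g′` is Lagrangian and complementary to `g`
    (∀ u ∈ g'sub, ∀ v ∈ g'sub, pr u v = 0) ∧
    Module.finrank ℝ g'sub = Module.finrank ℝ g ∧
    IsCompl gsub g'sub ∧
    -- `φ = ½[Λ,Λ] + δ(Λ)`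
    (∀ ξ η ζ : gs,
      p (p1 (Bd (L ξ, ξ) (L η, η))) ζ
        = p ⁅L ξ, L η⁆ ζ + p ⁅L η, L ζ⁆ ξ + p ⁅L ζ, L ξ⁆ η
          + p (L ξ) ⁅η, ζ⁆ + p (L η) ⁅ζ, ξ⁆ + p (L ζ) ⁅ξ, η⁆) :=
  twisted_manin_quasi_triple_general g gs p hp1 hp2 coadg hcoadg coadgs hcoadgs L hLskew
end

section
/- Let {x_i} be a basis of g with dual basis {ξ_i} of g*, Λ ∈ ∧²g, and let p′: d → g′ and p₁: d → g be the projections with respect to d = g ⊕ g′ where g′ = {Λξ+ξ}. Then Σ_{i,j} p′[Λξ_i+ξ_i, Λξ_j+ξ_j] ⊗ (x_i ∧ x_j) = 2 Σ_i (Λξ_i+ξ_i) ⊗ ([x_i, Λ] + δ(x_i)) in g′ ⊗ ∧²g, where the bracket is the Drinfeld double bracket, [x_i, Λ] denotes the adjoint action of x_i on ∧²g, and δ is the cobracket. -/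
/-!
Write `F_x := [x, Λ] + δ(x)`, viewed as the skew map `g* → g`. Transported to `g*` along
`ξ ↦ Λξ + ξ`, the bracket of `g′` is `[ξ, η]′ = [ξ, η] + ad*_{Λξ} η - ad*_{Λη} ξ`, and a direct
computation with the coadjoint identities gives `⟨x, [ξ, η]′⟩ = ⟨F_x ξ, η⟩`. Expanding
`[ξ_i, ξ_j]′` in the basis `{ξ_k}`, the left side becomes
`Σ_k (Λξ_k + ξ_k) ⊗ Σ_{i,j} ⟨F_{x_k} ξ_i, ξ_j⟩ x_i ∧ x_j`, and for a skew map `F` the inner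
sum is `2 F`.
-/

open TensorProduct

theorem sum_tmul_eq_sum_basis_tmul {R V M N ι κ : Type*} [CommSemiring R]
    [AddCommMonoid V] [Module R V] [AddCommMonoid M] [Module R M] [AddCommMonoid N] [Module R N]
    [Fintype ι] [Fintype κ] (b : Module.Basis ι R V) (Φ : V →ₗ[R] M) (c : κ → V) (w : κ → N) :
    ∑ a, Φ (c a) ⊗ₜ[R] w a = ∑ k, Φ (b k) ⊗ₜ[R] ∑ a, b.repr (c a) k • w a := by
  calc ∑ a, Φ (c a) ⊗ₜ[R] w a = ∑ a, ∑ k, Φ (b k) ⊗ₜ[R] (b.repr (c a) k • w a) := by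
        refine Finset.sum_congr rfl fun a _ => ?_
        conv_lhs => rw [← b.sum_repr (c a)]
        simp only [map_sum, map_smul, sum_tmul, smul_tmul]
    _ = _ := by rw [Finset.sum_comm]; simp only [tmul_sum]

section DualBases

variable {R g gs ι : Type*} [CommRing R] [AddCommGroup g] [Module R g]
  [AddCommGroup gs] [Module R gs] [DecidableEq ι]
  {p : g →ₗ[R] gs →ₗ[R] R} {bg : Module.Basis ι R g} {bgs : Module.Basis ι R gs}

/-- The bivector `a ∧ c`, as the contraction map `ξ ↦ ⟨a, ξ⟩ c - ⟨c, ξ⟩ a`. -/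
def wedge (p : g →ₗ[R] gs →ₗ[R] R) (a c : g) : gs →ₗ[R] g :=
  (p a).smulRight c - (p c).smulRight a

variable (hdual : ∀ i j, p (bg i) (bgs j) = if i = j then 1 else 0)
include hdual

theorem pairing_basis_left_s14 (i : ι) (η : gs) : p (bg i) η = bgs.repr η i := by
  have : p (bg i) = bgs.coord i := bgs.ext fun j => by
    simp [hdual, Finsupp.single_apply, eq_comm]
  exact LinearMap.congr_fun this η

theorem pairing_basis_right_s14 (x : g) (j : ι) : p x (bgs j) = bg.repr x j := by
  have : p.flip (bgs j) = bg.coord j := bg.ext fun i => by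
    simp [hdual, Finsupp.single_apply]
  exact LinearMap.congr_fun this x

theorem sum_pairing_smul_basis [Fintype ι] (η : gs) : ∑ i, p (bg i) η • bgs i = η := by
  simp only [pairing_basis_left_s14 hdual, bgs.sum_repr]

theorem linearMap_ext_of_pairing {f f' : gs →ₗ[R] g}
    (h : ∀ l m, p (f (bgs l)) (bgs m) = p (f' (bgs l)) (bgs m)) : f = f' :=
  bgs.ext fun l => bg.ext_elem fun m => by
    rw [← pairing_basis_right_s14 hdual, ← pairing_basis_right_s14 hdual]; exact h l m

theorem sum_pairing_smul_wedge_of_skew [Fintype ι] (F : gs →ₗ[R] g)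
    (hF : ∀ ξ η, p (F ξ) η = -p (F η) ξ) :
    ∑ i, ∑ j, p (F (bgs i)) (bgs j) • wedge p (bg i) (bg j) = (2 : R) • F := by
  refine linearMap_ext_of_pairing hdual fun l m => ?_
  have hsum : p ((∑ i, ∑ j, p (F (bgs i)) (bgs j) • wedge p (bg i) (bg j)) (bgs l)) (bgs m)
      = p (F (bgs l)) (bgs m) - p (F (bgs m)) (bgs l) := by
    simp [wedge, hdual, LinearMap.sum_apply, mul_sub, Finset.sum_sub_distrib,
      apply_ite (fun z : g => p z (bgs m)), mul_ite]
  rw [hsum, hF (bgs m), LinearMap.smul_apply, map_smul, LinearMap.smul_apply, smul_eq_mul]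
  ring

end DualBases

section DoubleBracket

variable {R g gs ι : Type*} [CommRing R] [LieRing g] [LieAlgebra R g] [LieRing gs]
  [LieAlgebra R gs] [Fintype ι] (p : g →ₗ[R] gs →ₗ[R] R) (coadg : g →ₗ[R] gs →ₗ[R] gs)
  (L : gs →ₗ[R] g)

/-- The `g*`-component of `p′[Lξ + ξ, Lη + η]`, i.e. the bracket of `g′ = {Lξ + ξ}` on `g*`. -/
def graphBracket (ξ η : gs) : gs :=
  ⁅ξ, η⁆ + coadg (L ξ) η - coadg (L η) ξ

theorem graphBracket_swap (ξ η : gs) :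
    graphBracket coadg L η ξ = -graphBracket coadg L ξ η := by
  rw [graphBracket, graphBracket, ← lie_skew]
  abel

/-- `[x, Λ]` for the bivector `Λ` encoded by the skew map `L`. -/
def adBivector (x : g) : gs →ₗ[R] g :=
  (LieAlgebra.ad R g x : g →ₗ[R] g) ∘ₗ L - L ∘ₗ coadg x

noncomputable def cobracket (bg : Module.Basis ι R g) (bgs : Module.Basis ι R gs) (x : g) :
    gs →ₗ[R] g :=
  ∑ i, ((p x) ∘ₗ (-(LieAlgebra.ad R gs (bgs i) : gs →ₗ[R] gs))).smulRight (bg i)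

variable {p coadg L} {bg : Module.Basis ι R g} {bgs : Module.Basis ι R gs} [DecidableEq ι]

theorem pairing_adBivector (hcoadg : ∀ (x y : g) (ξ : gs), p y (coadg x ξ) = p ⁅y, x⁆ ξ)
    (hLskew : ∀ ξ η : gs, p (L ξ) η = -p (L η) ξ) (x : g) (ξ η : gs) :
    p (adBivector coadg L x ξ) η = p ⁅x, L ξ⁆ η - p ⁅x, L η⁆ ξ := by
  rw [adBivector, LinearMap.sub_apply, map_sub, LinearMap.sub_apply, LinearMap.comp_apply,
    LinearMap.comp_apply, hLskew, hcoadg, ← lie_skew, map_neg, LinearMap.neg_apply, neg_neg]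
  rfl

theorem pairing_cobracket (hdual : ∀ i j, p (bg i) (bgs j) = if i = j then 1 else 0)
    (x : g) (ξ η : gs) :
    p (cobracket p bg bgs x ξ) η = p x ⁅ξ, η⁆ := by
  conv_rhs => rw [← sum_pairing_smul_basis hdual η, ← lie_skew, map_neg]
  simp [cobracket, LinearMap.sum_apply, sum_lie, mul_comm]

theorem pairing_graphBracket (hdual : ∀ i j, p (bg i) (bgs j) = if i = j then 1 else 0)
    (hcoadg : ∀ (x y : g) (ξ : gs), p y (coadg x ξ) = p ⁅y, x⁆ ξ)
    (hLskew : ∀ ξ η : gs, p (L ξ) η = -p (L η) ξ) (x : g) (ξ η : gs) :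
    p x (graphBracket coadg L ξ η) = p ((adBivector coadg L x + cobracket p bg bgs x) ξ) η := by
  rw [LinearMap.add_apply, map_add, LinearMap.add_apply, pairing_adBivector hcoadg hLskew,
    pairing_cobracket hdual, graphBracket, map_sub, map_add, hcoadg, hcoadg]
  ring

theorem sum_pairing_graphBracket_smul_wedge
    (hdual : ∀ i j, p (bg i) (bgs j) = if i = j then 1 else 0)
    (hcoadg : ∀ (x y : g) (ξ : gs), p y (coadg x ξ) = p ⁅y, x⁆ ξ)
    (hLskew : ∀ ξ η : gs, p (L ξ) η = -p (L η) ξ) (x : g) :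
    ∑ i, ∑ j, p x (graphBracket coadg L (bgs i) (bgs j)) • wedge p (bg i) (bg j)
      = (2 : R) • (adBivector coadg L x + cobracket p bg bgs x) := by
  simp only [pairing_graphBracket hdual hcoadg hLskew]
  refine sum_pairing_smul_wedge_of_skew hdual _ fun ξ η => ?_
  rw [← pairing_graphBracket hdual hcoadg hLskew, ← pairing_graphBracket hdual hcoadg hLskew,
    graphBracket_swap, map_neg]

end DoubleBracket

theorem quasi_triple_tensor_identity_general
    (g gs : Type) [LieRing g] [LieAlgebra ℝ g] [LieRing gs] [LieAlgebra ℝ gs]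
    (p : g →ₗ[ℝ] gs →ₗ[ℝ] ℝ)
    (coadg : g →ₗ[ℝ] gs →ₗ[ℝ] gs)
    (hcoadg : ∀ (x y : g) (ξ : gs), p y (coadg x ξ) = p ⁅y, x⁆ ξ)
    (coadgs : gs →ₗ[ℝ] g →ₗ[ℝ] g)
    -- dual bases `{x_i}` of `g` and `{ξ_i}` of `g*`
    (n : ℕ) (bg : Module.Basis (Fin n) ℝ g) (bgs : Module.Basis (Fin n) ℝ gs)
    (hdual : ∀ i j, p (bg i) (bgs j) = if i = j then (1:ℝ) else 0)
    (L : gs →ₗ[ℝ] g)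
    (hLskew : ∀ ξ η : gs, p (L ξ) η = - p (L η) ξ) :
    -- the double bracket, the projection `p′ : d → g′` along `g`,
    -- `x_i ∧ x_j ∈ ∧²g`, the adjoint action `[x,Λ]`, and the cobracket `δ(x)`
    let Bd : g × gs → g × gs → g × gs := fun u v =>
      (⁅u.1, v.1⁆ + coadgs u.2 v.1 - coadgs v.2 u.1,
       ⁅u.2, v.2⁆ + coadg u.1 v.2 - coadg v.1 u.2)
    let pdash : g × gs → g × gs := fun u => (L u.2, u.2)
    let wedge2 : g → g → (gs →ₗ[ℝ] g) := fun a c =>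
      (p a).smulRight c - (p c).smulRight a
    let adLam : g → (gs →ₗ[ℝ] g) := fun x =>
      ((LieAlgebra.ad ℝ g x : g →ₗ[ℝ] g) ∘ₗ L) - (L ∘ₗ coadg x)
    let deltaMap : g → (gs →ₗ[ℝ] g) := fun x =>
      ∑ i : Fin n, ((p x) ∘ₗ (- (LieAlgebra.ad ℝ gs (bgs i) : gs →ₗ[ℝ] gs))).smulRight (bg i)
    -- the identity in `g′ ⊗ ∧²g`
    (∑ i : Fin n, ∑ j : Fin n,
        (pdash (Bd (L (bgs i), bgs i) (L (bgs j), bgs j))) ⊗ₜ[ℝ] (wedge2 (bg i) (bg j)))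
      = (2:ℝ) • ∑ i : Fin n,
          (((L (bgs i), bgs i) : g × gs) ⊗ₜ[ℝ] (adLam (bg i) + deltaMap (bg i))) := by
  intro Bd pdash wedge2 adLam deltaMap
  let graph : gs →ₗ[ℝ] g × gs := L.prod LinearMap.id
  calc (∑ i : Fin n, ∑ j : Fin n,
        (pdash (Bd (L (bgs i), bgs i) (L (bgs j), bgs j))) ⊗ₜ[ℝ] (wedge2 (bg i) (bg j)))
      = ∑ ij : Fin n × Fin n,
          graph (graphBracket coadg L (bgs ij.1) (bgs ij.2)) ⊗ₜ[ℝ]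
            wedge p (bg ij.1) (bg ij.2) := by
        rw [Fintype.sum_prod_type]
        rfl
    _ = ∑ k, graph (bgs k) ⊗ₜ[ℝ] ∑ ij : Fin n × Fin n,
          bgs.repr (graphBracket coadg L (bgs ij.1) (bgs ij.2)) k • wedge p (bg ij.1) (bg ij.2) :=
        sum_tmul_eq_sum_basis_tmul bgs graph _ _
    _ = _ := by
        rw [Finset.smul_sum]
        refine Finset.sum_congr rfl fun k _ => ?_
        rw [← tmul_smul, Fintype.sum_prod_type]
        simp only [← pairing_basis_left_s14 hdual,
          sum_pairing_graphBracket_smul_wedge hdual hcoadg hLskew]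
        rfl

/-- Let `{x_i}` be a basis of `g` with dual basis `{ξ_i}` of `g*`,
`Λ ∈ ∧²g` (encoded by the skew map `L ξ = Λξ`), and let `p′ : d → g′` and `p₁ : d → g`
be the projections with respect to `d = g ⊕ g′`, `g′ = {Λξ+ξ}`.  Then
`Σ_{i,j} p′[Λξ_i+ξ_i, Λξ_j+ξ_j] ⊗ (x_i ∧ x_j) = 2 Σ_i (Λξ_i+ξ_i) ⊗ ([x_i,Λ] + δ(x_i))`
in `g′ ⊗ ∧²g`, where the bracket is the Drinfeld double bracket, `[x_i,Λ]` is the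
adjoint action of `x_i` on `∧²g`, and `δ` is the cobracket.  (Bivectors in `∧²g` are
encoded as the corresponding skew contraction maps `g* → g`.) -/
theorem quasi_triple_tensor_identity
    (g gs : Type) [LieRing g] [LieAlgebra ℝ g] [LieRing gs] [LieAlgebra ℝ gs]
    [FiniteDimensional ℝ g] [FiniteDimensional ℝ gs]
    (p : g →ₗ[ℝ] gs →ₗ[ℝ] ℝ)
    (hp1 : ∀ x : g, (∀ ξ : gs, p x ξ = 0) → x = 0)
    (hp2 : ∀ ξ : gs, (∀ x : g, p x ξ = 0) → ξ = 0)
    (coadg : g →ₗ[ℝ] gs →ₗ[ℝ] gs)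
    (hcoadg : ∀ (x y : g) (ξ : gs), p y (coadg x ξ) = p ⁅y, x⁆ ξ)
    (coadgs : gs →ₗ[ℝ] g →ₗ[ℝ] g)
    (hcoadgs : ∀ (ξ η : gs) (x : g), p (coadgs ξ x) η = p x ⁅η, ξ⁆)
    (hcocycle : ∀ (x y : g) (ξ η : gs),
      p ⁅x, y⁆ ⁅ξ, η⁆ =
        - p y ⁅coadg x ξ, η⁆ - p y ⁅ξ, coadg x η⁆
        + p x ⁅coadg y ξ, η⁆ + p x ⁅ξ, coadg y η⁆)
    -- dual bases `{x_i}` of `g` and `{ξ_i}` of `g*`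
    (n : ℕ) (bg : Module.Basis (Fin n) ℝ g) (bgs : Module.Basis (Fin n) ℝ gs)
    (hdual : ∀ i j, p (bg i) (bgs j) = if i = j then (1:ℝ) else 0)
    (L : gs →ₗ[ℝ] g)
    (hLskew : ∀ ξ η : gs, p (L ξ) η = - p (L η) ξ) :
    -- the double bracket, the projection `p′ : d → g′` along `g`,
    -- `x_i ∧ x_j ∈ ∧²g`, the adjoint action `[x,Λ]`, and the cobracket `δ(x)`
    let Bd : g × gs → g × gs → g × gs := fun u v =>
      (⁅u.1, v.1⁆ + coadgs u.2 v.1 - coadgs v.2 u.1,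
       ⁅u.2, v.2⁆ + coadg u.1 v.2 - coadg v.1 u.2)
    let pdash : g × gs → g × gs := fun u => (L u.2, u.2)
    let wedge2 : g → g → (gs →ₗ[ℝ] g) := fun a c =>
      (p a).smulRight c - (p c).smulRight a
    let adLam : g → (gs →ₗ[ℝ] g) := fun x =>
      ((LieAlgebra.ad ℝ g x : g →ₗ[ℝ] g) ∘ₗ L) - (L ∘ₗ coadg x)
    let deltaMap : g → (gs →ₗ[ℝ] g) := fun x =>
      ∑ i : Fin n, ((p x) ∘ₗ (- (LieAlgebra.ad ℝ gs (bgs i) : gs →ₗ[ℝ] gs))).smulRight (bg i)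
    -- the identity in `g′ ⊗ ∧²g`
    (∑ i : Fin n, ∑ j : Fin n,
        (pdash (Bd (L (bgs i), bgs i) (L (bgs j), bgs j))) ⊗ₜ[ℝ] (wedge2 (bg i) (bg j)))
      = (2:ℝ) • ∑ i : Fin n,
          (((L (bgs i), bgs i) : g × gs) ⊗ₜ[ℝ] (adLam (bg i) + deltaMap (bg i))) :=
  quasi_triple_tensor_identity_general g gs p coadg hcoadg coadgs n bg bgs hdual L hLskew
end

section
/- Let (G, π_G) be a Poisson Lie group, H ⊆ G a closed subgroup with Lie algebra h, and Λ ∈ ∧²g with Ad_h Λ − Λ + (r_{h⁻¹})_* π_G(h) ∈ h ∧ g for all h ∈ H. Then for every ξ ∈ h⁰ = {ξ ∈ g* : ξ|_h = 0} and h ∈ H: Ad_h(Λξ) + p_g(Ad_h ξ) − Λ(Ad*_{h⁻¹} ξ) ∈ h, where Ad_h on g* ⊂ d is via the double action and p_g: d → g is the projection along g*. -/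
/-!
Contracting the hypothesis on `Ad_a Λ − Λ + W_a` with `Ad*_{a⁻¹} ξ` gives the conclusion,
because `Ad*_{a⁻¹} ξ` stays in `h⁰` (the adjoint action preserves `h`) and
`Ad*_a (Ad*_{a⁻¹} ξ) = ξ` (the pairing separates `g*`).
-/

theorem LinearMap.SeparatingRight.ext {R M N : Type*} [CommRing R] [AddCommGroup M] [Module R M]
    [AddCommGroup N] [Module R N] {p : M →ₗ[R] N →ₗ[R] R} (hp : p.SeparatingRight)
    {ξ η : N} (h : ∀ x, p x ξ = p x η) : ξ = η :=
  sub_eq_zero.mp <| hp _ fun x => by rw [map_sub, h, sub_self]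

section Coadjoint

variable {R M N G : Type*} [CommRing R] [AddCommGroup M] [Module R M] [AddCommGroup N]
  [Module R N] [Group G] {p : M →ₗ[R] N →ₗ[R] R} {A : G →* (M ≃ₗ[R] M)} {Astar : G → N →ₗ[R] N}

theorem coadjoint_mul_apply (hp : p.SeparatingRight)
    (hAstar : ∀ a x ξ, p x (Astar a ξ) = p (A a⁻¹ x) ξ) (a b : G) (ξ : N) :
    Astar (a * b) ξ = Astar a (Astar b ξ) :=
  hp.ext fun x => by simp only [hAstar, mul_inv_rev, map_mul, LinearEquiv.mul_apply]

theorem coadjoint_one_apply (hp : p.SeparatingRight)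
    (hAstar : ∀ a x ξ, p x (Astar a ξ) = p (A a⁻¹ x) ξ) (ξ : N) : Astar 1 ξ = ξ :=
  hp.ext fun x => by rw [hAstar, inv_one, map_one]; rfl

theorem coadjoint_inv_apply_coadjoint (hp : p.SeparatingRight)
    (hAstar : ∀ a x ξ, p x (Astar a ξ) = p (A a⁻¹ x) ξ) (a : G) (ξ : N) :
    Astar a⁻¹ (Astar a ξ) = ξ := by
  rw [← coadjoint_mul_apply hp hAstar, inv_mul_cancel, coadjoint_one_apply hp hAstar]

theorem coadjoint_mem_annihilator {h : Submodule R M} (hAh : ∀ a, ∀ x ∈ h, A a x ∈ h)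
    (hAstar : ∀ a x ξ, p x (Astar a ξ) = p (A a⁻¹ x) ξ) (a : G) {ξ : N}
    (hξ : ∀ x ∈ h, p x ξ = 0) : ∀ x ∈ h, p x (Astar a ξ) = 0 := fun x hx => by
  rw [hAstar]
  exact hξ _ (hAh a⁻¹ x hx)

end Coadjoint

theorem Ad_invariance_of_Lambda_on_h0_general
    (g gs H : Type) [AddCommGroup g] [Module ℝ g] [AddCommGroup gs] [Module ℝ gs]
    [Group H]
    (p : g →ₗ[ℝ] gs →ₗ[ℝ] ℝ)
    (hp2 : ∀ ξ : gs, (∀ x : g, p x ξ = 0) → ξ = 0)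
    -- the subalgebra `h` of `g`, preserved by the adjoint action of `H`
    (hsub : Submodule ℝ g)
    (A : H →* (g ≃ₗ[ℝ] g))
    (hAh : ∀ (a : H), ∀ x ∈ hsub, A a x ∈ hsub)
    -- the coadjoint action: `Astar a ξ = Ad*_{a⁻¹} ξ`, `⟨x, Ad*_{a⁻¹}ξ⟩ = ⟨Ad_{a⁻¹}x, ξ⟩`
    (Astar : H → (gs →ₗ[ℝ] gs))
    (hAstar : ∀ (a : H) (x : g) (ξ : gs), p x (Astar a ξ) = p (A a⁻¹ x) ξ)
    -- `W a = (r_{a⁻¹})_* π_G(a) ∈ ∧²g`, skew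
    (W : H → (gs →ₗ[ℝ] g))
    -- `Λ`, skew
    (L : gs →ₗ[ℝ] g)
    -- hypothesis: `Ad_a Λ − Λ + (r_{a⁻¹})_* π_G(a) ∈ h ∧ g` for all `a ∈ H`,
    -- i.e. its contraction with any `ξ ∈ h⁰` lies in `h`
    (hLam : ∀ (a : H) (ξ : gs), (∀ x ∈ hsub, p x ξ = 0) →
      A a (L (Astar a⁻¹ ξ)) - L ξ + W a ξ ∈ hsub) :
    -- conclusion: `Ad_a(Λξ) + p_g(Ad_a ξ) − Λ(Ad*_{a⁻¹}ξ) ∈ h` for `ξ ∈ h⁰`, `a ∈ H`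
    ∀ (a : H) (ξ : gs), (∀ x ∈ hsub, p x ξ = 0) →
      A a (L ξ) + W a (Astar a ξ) - L (Astar a ξ) ∈ hsub := by
  intro a ξ hξ
  have key := hLam a (Astar a ξ) (coadjoint_mem_annihilator hAh hAstar a hξ)
  rw [coadjoint_inv_apply_coadjoint hp2 hAstar] at key
  rwa [sub_add_eq_add_sub] at key

/-- Let `(G, π_G)` be a Poisson Lie group, `H ⊆ G` a closed subgroup
with Lie algebra `h`, and `Λ ∈ ∧²g` (encoded by the skew map `L ξ = Λξ`) with
`Ad_a Λ − Λ + (r_{a⁻¹})_* π_G(a) ∈ h ∧ g` for all `a ∈ H`.  Then for every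
`ξ ∈ h⁰ = {ξ ∈ g* : ξ|_h = 0}` and `a ∈ H`:
`Ad_a(Λξ) + p_g(Ad_a ξ) − Λ(Ad*_{a⁻¹} ξ) ∈ h`, where `Ad_a` on `g* ⊂ d` is the
action on the double, `Ad_a ξ = ι_{Ad*_{a⁻¹}ξ}((r_{a⁻¹})_*π_G(a)) + Ad*_{a⁻¹}ξ`,
whose `g`-component is `W_a(Ad*_{a⁻¹}ξ)` with `W_a = (r_{a⁻¹})_*π_G(a) ∈ ∧²g`,
and `p_g : d → g` is the projection along `g*`.  Here the adjoint action `A = Ad` of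
`H` on `g`, the coadjoint action `Astar a = Ad*_{a⁻¹}`, and the bivectors `W_a` are
the data; `h ∧ g` membership of a bivector `B` is expressed by `ι_ξ B ∈ h` for all
`ξ ∈ h⁰`. -/
theorem Ad_invariance_of_Lambda_on_h0
    (g gs H : Type) [AddCommGroup g] [Module ℝ g] [AddCommGroup gs] [Module ℝ gs]
    [FiniteDimensional ℝ g] [FiniteDimensional ℝ gs] [Group H]
    (p : g →ₗ[ℝ] gs →ₗ[ℝ] ℝ)
    (hp1 : ∀ x : g, (∀ ξ : gs, p x ξ = 0) → x = 0)
    (hp2 : ∀ ξ : gs, (∀ x : g, p x ξ = 0) → ξ = 0)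
    -- the subalgebra `h` of `g`, preserved by the adjoint action of `H`
    (hsub : Submodule ℝ g)
    (A : H →* (g ≃ₗ[ℝ] g))
    (hAh : ∀ (a : H), ∀ x ∈ hsub, A a x ∈ hsub)
    -- the coadjoint action: `Astar a ξ = Ad*_{a⁻¹} ξ`, `⟨x, Ad*_{a⁻¹}ξ⟩ = ⟨Ad_{a⁻¹}x, ξ⟩`
    (Astar : H → (gs →ₗ[ℝ] gs))
    (hAstar : ∀ (a : H) (x : g) (ξ : gs), p x (Astar a ξ) = p (A a⁻¹ x) ξ)
    -- `W a = (r_{a⁻¹})_* π_G(a) ∈ ∧²g`, skew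
    (W : H → (gs →ₗ[ℝ] g))
    (hWskew : ∀ (a : H) (ξ η : gs), p (W a ξ) η = - p (W a η) ξ)
    -- `Λ`, skew
    (L : gs →ₗ[ℝ] g)
    (hLskew : ∀ ξ η : gs, p (L ξ) η = - p (L η) ξ)
    -- hypothesis: `Ad_a Λ − Λ + (r_{a⁻¹})_* π_G(a) ∈ h ∧ g` for all `a ∈ H`,
    -- i.e. its contraction with any `ξ ∈ h⁰` lies in `h`
    (hLam : ∀ (a : H) (ξ : gs), (∀ x ∈ hsub, p x ξ = 0) →
      A a (L (Astar a⁻¹ ξ)) - L ξ + W a ξ ∈ hsub) :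
    -- conclusion: `Ad_a(Λξ) + p_g(Ad_a ξ) − Λ(Ad*_{a⁻¹}ξ) ∈ h` for `ξ ∈ h⁰`, `a ∈ H`
    ∀ (a : H) (ξ : gs), (∀ x ∈ hsub, p x ξ = 0) →
      A a (L ξ) + W a (Astar a ξ) - L (Astar a ξ) ∈ hsub :=
  Ad_invariance_of_Lambda_on_h0_general g gs H p hp2 hsub A hAh Astar hAstar W L hLam
end
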